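/- arXiv:2403.11223 — 9 statements merged into one kernel-verified Lean document; each statement's English description precedes it below -/
import Mathlib

section
/- A finite graph is obligatory if and only if it is bipartite; that is, every graph of chromatic number at least ℵ₁ contains a copy of a given finite graph F (for every such graph) exactly when F is bipartite. -/
open Cardinal

universe u

/-- A colouring `f` of the vertices is proper for the edge set `E` if no edge
is monochromatic. -/
def IsProperColoring {V : Type*} {α : Type*} (E : Set (Set V)) (f : V → α) : Prop :=
  ∀ e ∈ E, ∃ x ∈ e, ∃ y ∈ e, f x ≠ f y

/-- The chromatic number of the hypergraph `(V, E)`. -/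
noncomputable def chromaticNumber (V : Type u) (E : Set (Set V)) : Cardinal.{u} :=
  sInf { κ : Cardinal.{u} | ∃ (α : Type u) (f : V → α), #α = κ ∧ IsProperColoring E f }

/-!
If `F` is not bipartite it has an odd closed walk, of length `L` say. The shift graph on increasing
`(L+1)`-tuples of an ordinal of cardinality `ℶ_(L+1)` has no odd closed walk of length at most `L`:
some entry of the first tuple survives the whole walk, since each step loses only one entry, and
its position moves by one at each step. Yet it is not countably colourable: a colouring of the
shift graph on `(r+2)`-tuples with `β` colours induces one on `(r+1)`-tuples with `𝒫 β × 𝒫 β`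
colours, so a countable colouring would bound the ordinal by `ℶ_L`.

Conversely, if `G` is not countably colourable then some `n` vertices have infinitely many common
neighbours (Erdős–Hajnal), so `G` contains `K_{n,ℵ₀}` and hence every bipartite graph on `n`
vertices. Otherwise, filter `V` by sets of smaller cardinality closed under finite common
neighbourhoods: every vertex has only finitely many neighbours of smaller rank, each layer is
coloured by induction on `#V`, and a greedy choice along the ranks combines these colourings.
-/

namespace SimpleGraph

variable {V W : Type*}

def edgePairs (G : SimpleGraph V) : Set (Set V) := {e | ∃ u v, G.Adj u v ∧ e = {u, v}}

def ofEdgePairs (E : Set (Set V)) : SimpleGraph V := fromRel fun u v => {u, v} ∈ E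

lemma ncard_of_mem_edgePairs {G : SimpleGraph V} {e : Set V} (he : e ∈ G.edgePairs) :
    e.ncard = 2 := by
  obtain ⟨u, v, huv, rfl⟩ := he
  exact Set.ncard_pair huv.ne

lemma edgePairs_ofEdgePairs {E : Set (Set V)} (hE : ∀ e ∈ E, e.ncard = 2) :
    (ofEdgePairs E).edgePairs = E := by
  ext e
  constructor
  · rintro ⟨u, v, ⟨-, huv | hvu⟩, rfl⟩
    · exact huv
    · rwa [Set.pair_comm]
  · intro he
    obtain ⟨u, v, huv, rfl⟩ := Set.ncard_eq_two.mp (hE e he)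
    exact ⟨u, v, ⟨huv, Or.inl he⟩, rfl⟩

lemma forall_twoUniform_iff {P : ∀ V : Type u, Set (Set V) → Prop} :
    (∀ (V : Type u) (E : Set (Set V)), (∀ e ∈ E, e.ncard = 2) → P V E) ↔
      ∀ (V : Type u) (G : SimpleGraph V), P V G.edgePairs := by
  refine ⟨fun h V G => h V _ fun _ => ncard_of_mem_edgePairs, fun h V E hE => ?_⟩
  simpa only [edgePairs_ofEdgePairs hE] using h V (ofEdgePairs E)

lemma isProperColoring_edgePairs_iff {α : Type*} {G : SimpleGraph V} {f : V → α} :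
    IsProperColoring G.edgePairs f ↔ ∀ ⦃u v⦄, G.Adj u v → f u ≠ f v := by
  constructor
  · intro hf u v huv
    obtain ⟨x, hx, y, hy, hxy⟩ := hf _ ⟨u, v, huv, rfl⟩
    rcases hx with rfl | rfl <;> rcases hy with rfl | rfl <;> first
      | exact absurd rfl hxy | exact hxy | exact hxy.symm
  · rintro hf _ ⟨u, v, huv, rfl⟩
    exact ⟨u, .inl rfl, v, .inr rfl, hf huv⟩

lemma exists_isProperColoring_edgePairs_iff {α : Type*} {G : SimpleGraph V} :
    (∃ f : V → α, IsProperColoring G.edgePairs f) ↔ Nonempty (G.Coloring α) := by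
  simp only [isProperColoring_edgePairs_iff]
  exact ⟨fun ⟨f, hf⟩ => ⟨Coloring.mk f fun h => hf h⟩, fun ⟨C⟩ => ⟨C, fun _ _ => C.valid⟩⟩

lemma isContained_iff_exists_injective {F : SimpleGraph W} {G : SimpleGraph V} :
    F ⊑ G ↔ ∃ φ : W → V, Function.Injective φ ∧ ∀ e ∈ F.edgePairs, φ '' e ∈ G.edgePairs := by
  constructor
  · rintro ⟨φ⟩
    refine ⟨φ, φ.injective, ?_⟩
    rintro _ ⟨u, v, huv, rfl⟩
    exact ⟨φ u, φ v, φ.toHom.map_adj huv, Set.image_pair _ _ _⟩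
  · rintro ⟨φ, hφ, hE⟩
    refine ⟨⟨⟨φ, fun {u v} huv => ?_⟩, hφ⟩⟩
    obtain ⟨x, y, hxy, he⟩ := hE _ ⟨u, v, huv, rfl⟩
    rw [Set.image_pair, Set.pair_eq_pair_iff] at he
    rcases he with ⟨hx, hy⟩ | ⟨hx, hy⟩
    · rwa [hx, hy]
    · rw [hx, hy]; exact hxy.symm

end SimpleGraph

lemma aleph_one_le_chromaticNumber_edgePairs_iff {V : Type u} {G : SimpleGraph V} :
    ℵ₁ ≤ chromaticNumber V G.edgePairs ↔ IsEmpty (G.Coloring ℕ) := by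
  rw [← not_nonempty_iff, ← SimpleGraph.exists_isProperColoring_edgePairs_iff]
  constructor
  · rintro hG ⟨f, hf⟩
    have hle : chromaticNumber V G.edgePairs ≤ #(ULift.{u} ℕ) :=
      csInf_le' ⟨_, ULift.up ∘ f, rfl, fun e he => by
        obtain ⟨x, hx, y, hy, hxy⟩ := hf e he
        exact ⟨x, hx, y, hy, fun h => hxy (congrArg ULift.down h)⟩⟩
    exact (hG.trans hle).not_gt (by simp)
  · intro hG
    refine le_csInf ⟨_, V, id, rfl,
      SimpleGraph.isProperColoring_edgePairs_iff.mpr fun _ _ h => h.ne⟩ ?_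
    rintro _ ⟨α, f, rfl, hf⟩
    by_contra! hα
    have : Countable α := by
      rwa [← mk_le_aleph0_iff, ← Order.lt_succ_iff, succ_aleph0]
    obtain ⟨ι, hι⟩ := Countable.exists_injective_nat α
    exact hG ⟨ι ∘ f, fun e he => by
      obtain ⟨x, hx, y, hy, hxy⟩ := hf e he
      exact ⟨x, hx, y, hy, hι.ne hxy⟩⟩

section ShiftGraph

universe v

variable {O : Type*} [LinearOrder O] {r : ℕ}

def shiftGraph (r : ℕ) (O : Type*) [LinearOrder O] :
    SimpleGraph {A : Fin (r + 1) → O // StrictMono A} :=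
  SimpleGraph.fromRel fun A B => Fin.tail A.1 = Fin.init B.1

lemma shiftGraph_adj_of_tail_eq_init {A B : {A : Fin (r + 2) → O // StrictMono A}}
    (h : Fin.tail A.1 = Fin.init B.1) : (shiftGraph (r + 1) O).Adj A B := by
  refine ⟨fun hAB => ?_, .inl h⟩
  have h0 : A.1 1 = B.1 0 := congrFun h 0
  rw [hAB] at h0
  exact (B.2 (Fin.zero_lt_one)).ne' h0

lemma exists_init_tail_eq {A B : {A : Fin (r + 1) → O // StrictMono A}}
    (h : Fin.tail A.1 = Fin.init B.1) (hlast : A.1 (Fin.last r) < B.1 (Fin.last r)) :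
    ∃ T : {A : Fin (r + 2) → O // StrictMono A}, Fin.init T.1 = A.1 ∧ Fin.tail T.1 = B.1 := by
  refine ⟨⟨Fin.snoc A.1 (B.1 (Fin.last r)), ?_⟩, Fin.init_snoc _ _, funext fun i => ?_⟩
  · rw [← Fin.insertNth_last']
    exact Fin.strictMono_insertNth_last A.2 _ hlast
  · obtain ⟨j, rfl⟩ | rfl := i.eq_castSucc_or_eq_last
    · show Fin.snoc (α := fun _ => O) A.1 _ j.castSucc.succ = _
      rw [Fin.succ_castSucc, Fin.snoc_castSucc]
      exact congrFun h j
    · simp [Fin.tail]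

lemma exists_init_tail_of_shiftGraph_adj {A B : {A : Fin (r + 1) → O // StrictMono A}}
    (h : (shiftGraph r O).Adj A B) :
    ∃ T : {A : Fin (r + 2) → O // StrictMono A},
      (Fin.init T.1 = A.1 ∧ Fin.tail T.1 = B.1) ∨ (Fin.init T.1 = B.1 ∧ Fin.tail T.1 = A.1) := by
  wlog htail : Fin.tail A.1 = Fin.init B.1 generalizing A B
  · obtain ⟨T, hT⟩ := this h.symm (h.2.resolve_left htail)
    exact ⟨T, hT.symm⟩
  have hne := h.1
  cases r with
  | zero =>
    have hlast : A.1 (Fin.last 0) ≠ B.1 (Fin.last 0) := fun heq =>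
      hne (Subtype.ext (funext fun i => by rwa [Fin.fin_one_eq_zero i]))
    rcases hlast.lt_or_gt with hlt | hgt
    · exact (exists_init_tail_eq htail hlt).imp fun _ => Or.inl
    · exact (exists_init_tail_eq (Subsingleton.elim _ _) hgt).imp fun _ => Or.inr
  | succ r =>
    refine (exists_init_tail_eq htail ?_).imp fun _ => Or.inl
    have : A.1 (Fin.last (r + 1)) = B.1 (Fin.last r).castSucc := congrFun htail (Fin.last r)
    rw [this]
    exact B.2 (Fin.castSucc_lt_last _)

def shiftGraphLowerColoring {β : Type*} (C : (shiftGraph (r + 1) O).Coloring β) :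
    (shiftGraph r O).Coloring (Set β × Set β) :=
  SimpleGraph.Coloring.mk
    (fun M => ({b | ∃ T, Fin.tail T.1 = M.1 ∧ C T = b}, {b | ∃ T, Fin.init T.1 = M.1 ∧ C T = b}))
    (by
      have hdisj : ∀ {T T' : {A : Fin (r + 2) → O // StrictMono A}} {M : Fin (r + 1) → O},
          Fin.tail T.1 = M → Fin.init T'.1 = M → C T ≠ C T' := fun hT hT' =>
        C.valid (shiftGraph_adj_of_tail_eq_init (hT.trans hT'.symm))
      intro M M' hadj heq
      have hsnd := Set.ext_iff.mp (Prod.mk.inj heq).2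
      obtain ⟨T, ⟨hinit, htail⟩ | ⟨hinit, htail⟩⟩ := exists_init_tail_of_shiftGraph_adj hadj
      · obtain ⟨T', hT', hCT'⟩ := (hsnd (C T)).mp ⟨T, hinit, rfl⟩
        exact hdisj htail hT' hCT'.symm
      · obtain ⟨T', hT', hCT'⟩ := (hsnd (C T)).mpr ⟨T, hinit, rfl⟩
        exact hdisj htail hT' hCT'.symm)

lemma val_eq_succ_of_tail_eq_init {A B : {A : Fin (r + 1) → O // StrictMono A}} (hne : A ≠ B)
    (h : Fin.tail A.1 = Fin.init B.1) {i j : Fin (r + 1)} (hij : A.1 i = B.1 j) :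
    (i : ℕ) = j + 1 := by
  obtain ⟨j, rfl⟩ | rfl := j.eq_castSucc_or_eq_last
  · have : A.1 i = A.1 j.succ := hij.trans (congrFun h j).symm
    simp [A.2.injective this]
  · cases r with
    | zero =>
      refine absurd (Subtype.ext (funext fun k => ?_)) hne
      rw [Fin.fin_one_eq_zero k]
      rwa [Fin.fin_one_eq_zero i, Fin.last_zero] at hij
    | succ r =>
      have hlast : B.1 (Fin.last r).castSucc = A.1 (Fin.last (r + 1)) := (congrFun h _).symm
      have := B.2 (Fin.castSucc_lt_last (Fin.last r))
      rw [hlast, ← hij] at this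
      exact absurd (A.2.monotone (Fin.le_last i)) this.not_ge

lemma shiftGraph_adj_index {A B : {A : Fin (r + 1) → O // StrictMono A}}
    (h : (shiftGraph r O).Adj A B) {i j : Fin (r + 1)} (hij : A.1 i = B.1 j) :
    (i : ℕ) = j + 1 ∨ (j : ℕ) = i + 1 := by
  obtain ⟨hne, hAB | hBA⟩ := h
  · exact .inl (val_eq_succ_of_tail_eq_init hne hAB hij)
  · exact .inr (val_eq_succ_of_tail_eq_init hne.symm hBA hij.symm)

lemma exists_range_subset_insert_of_shiftGraph_adj {A B : {A : Fin (r + 1) → O // StrictMono A}}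
    (h : (shiftGraph r O).Adj A B) : ∃ b, Set.range B.1 ⊆ insert b (Set.range A.1) := by
  obtain ⟨-, hAB | hBA⟩ := h
  · refine ⟨B.1 (Fin.last r), ?_⟩
    rintro _ ⟨j, rfl⟩
    obtain ⟨j, rfl⟩ | rfl := j.eq_castSucc_or_eq_last
    · exact .inr ⟨j.succ, congrFun hAB j⟩
    · exact .inl rfl
  · refine ⟨B.1 0, ?_⟩
    rintro _ ⟨j, rfl⟩
    obtain rfl | ⟨j, rfl⟩ := j.eq_zero_or_eq_succ
    · exact .inl rfl
    · exact .inr ⟨j.castSucc, (congrFun hBA j).symm⟩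

lemma exists_mem_range_forall_support {A B : {A : Fin (r + 1) → O // StrictMono A}}
    (w : (shiftGraph r O).Walk A B) {X : Set O} (hX : X ⊆ Set.range A.1)
    (hw : w.length < X.encard) : ∃ x ∈ X, ∀ v ∈ w.support, x ∈ Set.range v.1 := by
  induction w generalizing X with
  | nil =>
    obtain ⟨x, hx⟩ := Set.encard_pos.mp (pos_of_gt hw)
    exact ⟨x, hx, by simpa using hX hx⟩
  | @cons A A' B h w ih =>
    obtain ⟨a, ha⟩ := exists_range_subset_insert_of_shiftGraph_adj h.symm
    have hcard : X.encard ≤ (X ∩ Set.range A'.1).encard + 1 :=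
      (Set.encard_le_encard fun x hx => (ha (hX hx)).imp id fun h' => ⟨hx, h'⟩).trans
        (Set.encard_insert_le _ _)
    rw [SimpleGraph.Walk.length_cons, Nat.cast_succ] at hw
    obtain ⟨x, ⟨hxX, -⟩, hx⟩ := ih Set.inter_subset_right
      ((ENat.add_lt_add_iff_right ENat.one_ne_top).mp (hw.trans_le hcard))
    refine ⟨x, hxX, fun v hv => ?_⟩
    rcases List.mem_cons.mp (SimpleGraph.Walk.support_cons h w ▸ hv) with rfl | hv
    · exact hX hxX
    · exact hx v hv

lemma modEq_add_length_of_forall_support {A B : {A : Fin (r + 1) → O // StrictMono A}}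
    (w : (shiftGraph r O).Walk A B) {x : O} (hx : ∀ v ∈ w.support, x ∈ Set.range v.1)
    {i j : Fin (r + 1)} (hi : A.1 i = x) (hj : B.1 j = x) : i + w.length ≡ j [MOD 2] := by
  induction w generalizing i with
  | @nil A =>
    rw [A.2.injective (hi.trans hj.symm), SimpleGraph.Walk.length_nil, add_zero]
  | @cons A A' B h w ih =>
    obtain ⟨k, hk⟩ := hx A' (by simp)
    have hrest := ih (fun v hv => hx v (by simp [hv])) hk hj
    have hstep := shiftGraph_adj_index h (hi.trans hk.symm)
    rw [SimpleGraph.Walk.length_cons]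
    unfold Nat.ModEq at hrest ⊢
    omega

lemma even_length_of_shiftGraph_walk {A : {A : Fin (r + 1) → O // StrictMono A}}
    (w : (shiftGraph r O).Walk A A) (hw : w.length ≤ r) : Even w.length := by
  have hcard : w.length < (Set.range A.1).encard := by
    refine lt_of_lt_of_le ?_ A.2.injective.encard_range
    simp only [ENat.card_eq_coe_fintype_card, Fintype.card_fin]
    exact_mod_cast Nat.lt_succ_of_le hw
  obtain ⟨_, ⟨i, rfl⟩, hx⟩ := exists_mem_range_forall_support w subset_rfl hcard
  have := modEq_add_length_of_forall_support w hx rfl rfl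
  unfold Nat.ModEq at this
  rw [Nat.even_iff]
  omega

lemma mk_le_beth_of_shiftGraph_coloring {O : Type u} [LinearOrder O] {β : Type v} (r k : ℕ)
    (C : (shiftGraph r O).Coloring β) (hβ : #β ≤ ℶ_ k) : #O ≤ ℶ_ (k + r : ℕ) := by
  induction r generalizing k β with
  | zero =>
    let const : O → {A : Fin 1 → O // StrictMono A} :=
      fun o => ⟨fun _ => o, Subsingleton.strictMono _⟩
    have hinj : Function.Injective (C ∘ const) := fun o o' h => by
      by_contra hne
      refine C.valid ⟨fun h' => hne (congrFun (congrArg Subtype.val h') 0), .inl ?_⟩ h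
      exact Subsingleton.elim _ _
    have := (lift_mk_le_lift_mk_of_injective hinj).trans (lift_le.mpr hβ)
    simpa using this
  | succ r ih =>
    refine (ih (k + 1) (shiftGraphLowerColoring C) ?_).trans_eq (by ring_nf)
    have h2 : (2 : Cardinal) ^ #β ≤ ℶ_ (k + 1 : ℕ) := by
      rw [Nat.cast_succ, beth_add_one]
      exact power_le_power_left two_ne_zero hβ
    calc #(Set β × Set β) = 2 ^ #β * 2 ^ #β := by simp
      _ ≤ ℶ_ (k + 1 : ℕ) * ℶ_ (k + 1 : ℕ) := mul_le_mul' h2 h2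
      _ = ℶ_ (k + 1 : ℕ) := mul_eq_self (aleph0_le_beth _)

lemma isEmpty_coloring_nat_shiftGraph {O : Type u} [LinearOrder O] (h : ℶ_ r < #O) :
    IsEmpty ((shiftGraph r O).Coloring ℕ) :=
  ⟨fun C => (mk_le_beth_of_shiftGraph_coloring r 0 C (by simp)).not_gt (by simpa using h)⟩

end ShiftGraph

section FinitaryClosure

variable {V : Type u} (N : Finset V → Set V)

def closureStep (Y : Set V) : Set V := Y ∪ ⋃ (S : Finset V) (_ : ↑S ⊆ Y), N S

def finitaryClosure (X : Set V) : Set V := ⋃ k : ℕ, (closureStep N)^[k] X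

variable {N}

lemma monotone_closureStep : Monotone (closureStep N) :=
  fun _ _ h => Set.union_subset_union h
    (Set.biUnion_mono (fun _ hS => Set.Subset.trans hS h) fun _ _ => subset_rfl)

lemma monotone_iterate_closureStep (X : Set V) : Monotone fun k => (closureStep N)^[k] X :=
  fun _ _ hkl => Function.monotone_iterate_of_id_le (fun _ => Set.subset_union_left) hkl X

lemma subset_finitaryClosure (X : Set V) : X ⊆ finitaryClosure N X :=
  Set.subset_iUnion (fun k => (closureStep N)^[k] X) 0

lemma finitaryClosure_mono : Monotone (finitaryClosure N) :=
  fun _ _ h => Set.iUnion_mono fun k => monotone_closureStep.iterate k h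

lemma subset_finitaryClosure_of_subset {X : Set V} {S : Finset V}
    (hS : ↑S ⊆ finitaryClosure N X) : N S ⊆ finitaryClosure N X := by
  obtain ⟨k, hk⟩ :=
    (monotone_iterate_closureStep X).directed_le.exists_mem_subset_of_finset_subset_biUnion hS
  refine subset_trans ?_ (Set.subset_iUnion _ (k + 1))
  rw [Function.iterate_succ_apply']
  exact Set.subset_union_of_subset_right (Set.subset_biUnion_of_mem (u := N) hk) _

lemma mk_closureStep_le (hN : ∀ S, (N S).Countable) {Y : Set V} {c : Cardinal.{u}}
    (hc : ℵ₀ ≤ c) (hY : #Y ≤ c) : #(closureStep N Y) ≤ c := by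
  classical
  have hsub : #{S : Finset V | ↑S ⊆ Y} ≤ c := by
    have hsurj : Function.Surjective fun S : Finset Y =>
        (⟨S.map (Function.Embedding.subtype _), by simp⟩ : {S : Finset V | ↑S ⊆ Y}) := by
      rintro ⟨S, hS⟩
      exact ⟨S.subtype (· ∈ Y), Subtype.ext (Finset.subtype_map_of_mem fun x hx => hS hx)⟩
    calc #{S : Finset V | ↑S ⊆ Y} ≤ #(Finset Y) := mk_le_of_surjective hsurj
      _ ≤ #(List Y) := mk_le_of_surjective List.toFinset_surjective
      _ ≤ max ℵ₀ #Y := mk_list_le_max _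
      _ ≤ c := max_le hc hY
  refine (mk_union_le _ _).trans (add_le_of_le hc hY ((mk_biUnion_le _ _).trans ?_))
  exact mul_le_of_le hc hsub (ciSup_le' fun S => (hN S.1).le_aleph0.trans hc)

lemma mk_finitaryClosure_le (hN : ∀ S, (N S).Countable) {X : Set V} {c : Cardinal.{u}}
    (hc : ℵ₀ ≤ c) (hX : #X ≤ c) : #(finitaryClosure N X) ≤ c := by
  have hiter : ∀ k, #((closureStep N)^[k] X) ≤ c := by
    intro k
    induction k with
    | zero => exact hX
    | succ k ih => rw [Function.iterate_succ_apply']; exact mk_closureStep_le hN hc ih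
  have := mk_iUnion_le_lift.{u, 0} fun k => (closureStep N)^[k] X
  simp only [lift_uzero, mk_nat, lift_aleph0] at this
  exact this.trans (mul_le_of_le hc hc (ciSup_le' hiter))

end FinitaryClosure

namespace SimpleGraph

variable {V : Type u} {G : SimpleGraph V}

lemma exists_rank_small_layers_finite_back (hV : ℵ₀ < #V)
    (hG : ∀ X : Set V, X.Infinite → ∃ S : Finset V, ↑S ⊆ X ∧ {v | ∀ s ∈ S, G.Adj v s}.Finite) :
    ∃ rank : V → (#V).ord.ToType, (∀ a, #(rank ⁻¹' {a}) < #V) ∧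
      ∀ v, {u | G.Adj u v ∧ rank u < rank v}.Finite := by
  classical
  obtain ⟨e⟩ : Nonempty ((#V).ord.ToType ≃ V) := by rw [← Cardinal.eq, mk_ord_toType]
  let N : Finset V → Set V := fun S => {v | {w | ∀ s ∈ S, G.Adj w s}.Finite ∧ ∀ s ∈ S, G.Adj v s}
  have hN : ∀ S, (N S).Countable := fun S => by
    by_cases hS : {w | ∀ s ∈ S, G.Adj w s}.Finite
    · exact hS.countable.mono fun v hv => hv.2
    · simp [N, hS]
  let filt : (#V).ord.ToType → Set V := fun a => finitaryClosure N (e '' Set.Iic a)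
  have hcover : ∀ v, v ∈ filt (e.symm v) := fun v =>
    subset_finitaryClosure _ ⟨e.symm v, Set.mem_Iic.mpr le_rfl, e.apply_symm_apply v⟩
  have hne : ∀ v, {a | v ∈ filt a}.Nonempty := fun v => ⟨_, hcover v⟩
  let rank : V → (#V).ord.ToType := fun v => wellFounded_lt.min _ (hne v)
  have hrank_mem : ∀ v, v ∈ filt (rank v) := fun v => wellFounded_lt.min_mem _ (hne v)
  have hrank_min : ∀ v b, b < rank v → v ∉ filt b := fun v b hb hv =>
    wellFounded_lt.not_lt_min {a | v ∈ filt a} hv hb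
  refine ⟨rank, fun a => ?_, fun v => ?_⟩
  · have hIic : #(Set.Iic a) < #V := by
      simpa using mk_Iic_lt a (by simp [Ordinal.type_toType]) (by simpa using hV.le)
    calc #(rank ⁻¹' {a}) ≤ #(filt a) := mk_le_mk_of_subset fun v hv => hv ▸ hrank_mem v
      _ ≤ max #(e '' Set.Iic a) ℵ₀ := mk_finitaryClosure_le hN (le_max_right _ _) (le_max_left _ _)
      _ < #V := max_lt (mk_image_le.trans_lt hIic) hV
  · by_contra hinf
    obtain ⟨S, hSback, hSfin⟩ := hG _ hinf
    -- `u₀` makes the set nonempty, so that its ranks have a maximum below `rank v`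
    obtain ⟨u₀, hu₀⟩ := Set.Infinite.nonempty hinf
    have hback : ∀ u ∈ insert u₀ S, G.Adj u v ∧ rank u < rank v := by
      simpa [Finset.forall_mem_insert] using ⟨hu₀, fun u hu => hSback hu⟩
    obtain ⟨u, hu, hub⟩ := ((insert u₀ S).image rank).max'_mem (by simp) |> Finset.mem_image.mp
    set b := ((insert u₀ S).image rank).max' (by simp)
    have hfilt : ↑(insert u₀ S) ⊆ filt b := fun w hw =>
      finitaryClosure_mono (Set.image_mono (Set.Iic_subset_Iic.mpr
        (Finset.le_max' _ _ (Finset.mem_image_of_mem rank hw)))) (hrank_mem w)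
    have hvN : v ∈ N (insert u₀ S) :=
      ⟨hSfin.subset fun w hw s hs => hw s (Finset.mem_insert_of_mem hs),
        fun s hs => (hback s hs).1.symm⟩
    exact hrank_min v b (hub ▸ (hback u hu).2) (subset_finitaryClosure_of_subset hfilt hvN)

lemma nonempty_coloring_nat_of_rank {ι : Type*} [LinearOrder ι] [WellFoundedLT ι] (rank : V → ι)
    (hback : ∀ v, {u | G.Adj u v ∧ rank u < rank v}.Finite)
    (hlayer : ∀ a, Nonempty ((G.induce (rank ⁻¹' {a})).Coloring ℕ)) :
    Nonempty (G.Coloring ℕ) := by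
  have C := fun a => (hlayer a).some
  let inner : V → ℕ := fun v => C (rank v) ⟨v, rfl⟩
  have hinner : ∀ {u v}, G.Adj u v → rank u = rank v → inner u ≠ inner v := by
    have hinner_eq : ∀ v a (h : rank v = a), inner v = C a ⟨v, h⟩ := by rintro v _ rfl; rfl
    intro u v huv hr
    rw [hinner_eq u (rank v) hr]
    exact (C (rank v)).valid huv
  have hfresh : ∀ v (rec : ∀ u, rank u < rank v → ℕ × ℕ),
      ∃ k : ℕ, ∀ u (_ : G.Adj u v) (hr : rank u < rank v), (rec u hr).2 ≠ k := by
    intro v rec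
    classical
    obtain ⟨k, hk⟩ :=
      ((hback v).image fun u => if h : rank u < rank v then (rec u h).2 else 0).exists_notMem
    exact ⟨k, fun u hu hr hk' => hk ⟨u, ⟨hu, hr⟩, by simp [hr, hk']⟩⟩
  let col : V → ℕ × ℕ :=
    (InvImage.wf rank wellFounded_lt).fix fun v rec => (inner v, (hfresh v rec).choose)
  have hcol_eq : ∀ v, col v = (inner v, (hfresh v fun u _ => col u).choose) :=
    fun v => WellFounded.fix_eq _ _ _
  have hcol : ∀ {u v}, G.Adj u v → col u ≠ col v := by
    intro u v huv
    rcases lt_trichotomy (rank u) (rank v) with hr | hr | hr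
    · rw [hcol_eq v]
      exact fun h => (hfresh v fun u _ => col u).choose_spec u huv hr (congrArg Prod.snd h)
    · rw [hcol_eq u, hcol_eq v]
      exact fun h => hinner huv hr (congrArg Prod.fst h)
    · rw [hcol_eq u]
      exact fun h =>
        (hfresh u fun v _ => col v).choose_spec v huv.symm hr (congrArg Prod.snd h).symm
  exact ⟨Coloring.mk (Nat.pairEquiv ∘ col) fun huv => Nat.pairEquiv.injective.ne (hcol huv)⟩

variable {α : Type*}

lemma completeBipartiteGraph_isContained_of_infinite (f : α ↪ V)
    (hf : {v | ∀ a, G.Adj v (f a)}.Infinite) : completeBipartiteGraph α ℕ ⊑ G := by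
  have := hf.to_subtype
  let g := Infinite.natEmbedding {v | ∀ a, G.Adj v (f a)}
  refine ⟨⟨⟨Sum.elim f (fun n => g n), ?_⟩, ?_⟩⟩
  · rintro (a | n) (b | m) hab <;> simp at hab
    · exact ((g m).2 a).symm
    · exact (g n).2 b
  · rintro (a | n) (b | m) hab
    · simp [f.injective hab]
    · have hab : f a = g m := hab
      exact (G.irrefl (hab ▸ (g m).2 a)).elim
    · have hab : (g n : V) = f b := hab
      exact (G.irrefl (hab ▸ (g n).2 b)).elim
    · simp [g.injective (Subtype.ext hab)]

lemma exists_finite_commonNbhd_of_free [Finite α] (h : (completeBipartiteGraph α ℕ).Free G)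
    {X : Set V} (hX : X.Infinite) :
    ∃ S : Finset V, ↑S ⊆ X ∧ {v | ∀ s ∈ S, G.Adj v s}.Finite := by
  have := hX.to_subtype
  obtain ⟨ι, hι⟩ := Countable.exists_injective_nat α
  let f : α ↪ V := ⟨fun a => (Infinite.natEmbedding X (ι a)).1,
    fun a b hab => hι ((Infinite.natEmbedding X).injective (Subtype.ext hab))⟩
  refine ⟨(Set.finite_range f).toFinset, fun v hv => ?_, ?_⟩
  · obtain ⟨a, rfl⟩ := (Set.Finite.mem_toFinset _).mp hv
    exact (Infinite.natEmbedding X (ι a)).2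
  · by_contra hinf
    refine h (completeBipartiteGraph_isContained_of_infinite f ?_)
    simpa using hinf

theorem nonempty_coloring_nat_of_free [Finite α] (h : (completeBipartiteGraph α ℕ).Free G) :
    Nonempty (G.Coloring ℕ) := by
  suffices ∀ κ : Cardinal.{u}, ∀ (V : Type u) (G : SimpleGraph V), #V = κ →
      (completeBipartiteGraph α ℕ).Free G → Nonempty (G.Coloring ℕ) from this _ V G rfl h
  intro κ
  induction κ using WellFoundedLT.induction with
  | _ κ ih =>
    rintro V G rfl hG
    rcases le_or_gt #V ℵ₀ with hV | hV
    · have := mk_le_aleph0_iff.mp hV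
      obtain ⟨ι, hι⟩ := Countable.exists_injective_nat V
      exact ⟨Coloring.mk ι fun huv => hι.ne huv.ne⟩
    · obtain ⟨rank, hsmall, hback⟩ :=
        exists_rank_small_layers_finite_back hV fun X hX => exists_finite_commonNbhd_of_free hG hX
      exact nonempty_coloring_nat_of_rank rank hback fun a =>
        ih _ (hsmall a) _ _ rfl fun hK => hG (hK.trans ⟨Copy.induce G _⟩)

theorem completeBipartiteGraph_isContained_of_isEmpty_coloring [Finite α]
    (h : IsEmpty (G.Coloring ℕ)) : completeBipartiteGraph α ℕ ⊑ G :=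
  not_free.mp fun hfree => h.false (nonempty_coloring_nat_of_free hfree).some

lemma isContained_completeBipartiteGraph_of_colorable_two {W : Type*} [Countable W]
    {F : SimpleGraph W} (hF : F.Colorable 2) : F ⊑ completeBipartiteGraph W ℕ := by
  obtain ⟨c⟩ := hF
  obtain ⟨ι, hι⟩ := Countable.exists_injective_nat W
  let φ : W → W ⊕ ℕ := fun w => if c w = 0 then .inl w else .inr (ι w)
  refine ⟨⟨⟨φ, fun {u v} huv => ?_⟩, fun u v huv => ?_⟩⟩
  · have := c.valid huv
    change (completeBipartiteGraph W ℕ).Adj (φ u) (φ v)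
    simp only [φ]
    split_ifs <;> simp_all
    omega
  · change φ u = φ v at huv
    simp only [φ] at huv
    split_ifs at huv <;> simp_all [hι.eq_iff]

theorem forall_isContained_iff_colorable_two {W : Type*} [Finite W] (F : SimpleGraph W) :
    (∀ (V : Type u) (G : SimpleGraph V), IsEmpty (G.Coloring ℕ) → F ⊑ G) ↔ F.Colorable 2 := by
  refine ⟨fun hF => two_colorable_iff_forall_loop_even.mpr fun a w => ?_, fun hF V G hG => ?_⟩
  · let O := (ℶ_ (w.length + 1 : ℕ) : Cardinal.{u}).ord.ToType
    obtain ⟨φ⟩ := hF _ (shiftGraph w.length O)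
      (isEmpty_coloring_nat_shiftGraph (by simpa [O] using cantor _))
    simpa using even_length_of_shiftGraph_walk (w.map φ.toHom) (by simp)
  · exact (isContained_completeBipartiteGraph_of_colorable_two hF).trans
      (completeBipartiteGraph_isContained_of_isEmpty_coloring hG)

end SimpleGraph

/-- **Theorem (Erdős–Hajnal).** A finite graph (given by its vertex type `VF` and its
set `EF` of `2`-element edges) is obligatory — i.e. every graph of chromatic number at
least `ℵ₁` contains a copy of it — if and only if it is bipartite, i.e. properly
`2`-colourable. -/
theorem obligatory_iff_bipartite {VF : Type} [Finite VF] (EF : Set (Set VF))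
    (hEF : ∀ e ∈ EF, e.ncard = 2) :
    (∀ (V : Type u) (E : Set (Set V)), (∀ e ∈ E, e.ncard = 2) →
      Cardinal.aleph 1 ≤ chromaticNumber V E →
      ∃ φ : VF → V, Function.Injective φ ∧ ∀ e ∈ EF, φ '' e ∈ E)
    ↔ ∃ c : VF → Fin 2, IsProperColoring EF c := by
  rw [← SimpleGraph.edgePairs_ofEdgePairs hEF, SimpleGraph.exists_isProperColoring_edgePairs_iff,
    SimpleGraph.forall_twoUniform_iff (P := fun V E => ℵ₁ ≤ chromaticNumber V E → _)]
  simp only [aleph_one_le_chromaticNumber_edgePairs_iff,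
    ← SimpleGraph.isContained_iff_exists_injective]
  exact SimpleGraph.forall_isContained_iff_colorable_two _
end

section
/- For every integer k ≥ 2 and every even integer ℓ ≥ 4, the k-uniform expansion C^{(k)}_ℓ of the cycle C_ℓ is obligatory. -/
open Cardinal

universe u

/-- `(V, E)` contains a subhypergraph isomorphic to the `k`-uniform expansion
`C^{(k)}_ℓ` of the cycle `C_ℓ`: there are distinct vertices `x i` for `i ∈ ZMod ℓ`
and edges `e i ⊇ {x i, x (i+1)}`, two distinct such edges intersecting exactly in
the intersection of the corresponding graph edges. -/
def ContainsExpansionCycle (k l : ℕ) {V : Type u} (E : Set (Set V)) : Prop :=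
  ∃ (x : ZMod l → V) (e : ZMod l → Set V),
    Function.Injective x ∧
    (∀ i, e i ∈ E) ∧
    (∀ i, x i ∈ e i ∧ x (i + 1) ∈ e i) ∧
    ∀ i j, i ≠ j → e i ∩ e j = ({x i, x (i + 1)} : Set V) ∩ {x j, x (j + 1)}

/-!
Induction on `k`; let `E` be `k`-uniform with no proper colouring by `ℕ`, and `ℓ = 2m`.
If for some `2 ≤ j < k` the `j`-sets that are kernels of uncountable sunflowers of `E` admit no
such colouring either, they contain an expansion of `C_ℓ` by induction, and choosing one member of
each of its sunflowers, its petal avoiding the finitely many vertices already used, lifts it to `E`.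
Otherwise only the edges `Ê` of `E` containing none of these kernels matter: colourings of the
kernels and of `Ê` combine into one of `E`, so `Ê` has no proper colouring by `ℕ`, while by
construction every uncountable sunflower of `Ê` has a kernel of at most one vertex.

If some injective `m`-tuple `w` is the set of tips of uncountably many fans of `Ê` (edges through a
centre `v` and the `w i`, pairwise meeting only in `v`), the Δ-system lemma refines these fans so
that, for `m` of the centres, all the edges form an expansion of `K_{m,m}`, which contains one of
`C_{2m}`. If every such family of centres is countable, `Ê` is coloured by transfinite induction on
the size of the vertex set: filter it by sets closed under adding fan centres, and colour layer by
layer, avoiding at each vertex the finitely many colours forced by edges into earlier layers.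
-/

open Set Function

section DeltaSystem

variable {ι α : Type*}

theorem exists_uncountable_pairwiseDisjoint {I : Set ι} {A : ι → Set α} (hI : ¬ I.Countable)
    (hA : ∀ i ∈ I, (A i).Countable) (hfib : ∀ x, {i ∈ I | x ∈ A i}.Countable) :
    ∃ J ⊆ I, ¬ J.Countable ∧ J.PairwiseDisjoint A := by
  obtain ⟨M, hM⟩ := zorn_subset {J | J ⊆ I ∧ J.PairwiseDisjoint A} fun c hc hchain =>
    ⟨⋃₀ c, ⟨sUnion_subset fun J hJ => (hc hJ).1,
      (pairwise_sUnion hchain.directedOn).2 fun J hJ => (hc hJ).2⟩, fun _ => subset_sUnion_of_mem⟩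
  refine ⟨M, hM.prop.1, fun hMc => hI ?_, hM.prop.2⟩
  -- by maximality, an index outside `M` meets some `A j` with `j ∈ M`
  have hcover : I ⊆ M ∪ ⋃ x ∈ ⋃ j ∈ M, A j, {i ∈ I | x ∈ A i} := by
    intro i hi
    by_cases hiM : i ∈ M
    · exact Or.inl hiM
    refine Or.inr (by_contra fun hcon => hiM (hM.mem_of_prop_insert
      ⟨insert_subset hi hM.prop.1, hM.prop.2.insert fun j hj _ => ?_⟩))
    exact disjoint_left.2 fun x hxi hxj => hcon (mem_biUnion (mem_biUnion hj hxj) ⟨hi, hxi⟩)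
  exact (hMc.union ((hMc.biUnion fun j hj => hA j (hM.prop.1 hj)).biUnion
    fun x _ => hfib x)).mono hcover

theorem exists_uncountable_deltaSystem (n : ℕ) {I : Set ι} {A : ι → Set α} (hI : ¬ I.Countable)
    (hA : ∀ i ∈ I, (A i).Finite ∧ (A i).ncard ≤ n) :
    ∃ J ⊆ I, ¬ J.Countable ∧ ∃ K, J.Pairwise fun i j => A i ∩ A j = K := by
  induction n generalizing I A with
  | zero =>
    refine ⟨I, subset_rfl, hI, ∅, fun i hi j _ _ => ?_⟩
    change A i ∩ A j = ∅
    rw [(ncard_eq_zero (hA i hi).1).1 (Nat.le_zero.1 (hA i hi).2), empty_inter]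
  | succ n ih =>
    by_cases hx : ∃ x, ¬ {i ∈ I | x ∈ A i}.Countable
    · obtain ⟨x, hx⟩ := hx
      obtain ⟨J, hJ, hJc, K, hK⟩ := ih (A := fun i => A i \ {x}) hx fun i hi =>
        ⟨(hA i hi.1).1.sdiff, by
          rw [ncard_sdiff_singleton_of_mem hi.2]; have := (hA i hi.1).2; omega⟩
      refine ⟨J, fun i hi => (hJ hi).1, hJc, insert x K, fun i hi j hj hij => ?_⟩
      rw [← hK hi hj hij]
      ext y
      have := (hJ hi).2
      have := (hJ hj).2
      by_cases hy : y = x <;> simp_all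
    · push Not at hx
      obtain ⟨J, hJ, hJc, hdisj⟩ := exists_uncountable_pairwiseDisjoint hI
        (fun i hi => (hA i hi).1.countable) hx
      exact ⟨J, hJ, hJc, ∅, fun i hi j hj hij => (hdisj hi hj hij).inter_eq⟩

theorem not_countable_image_of_countable_fibres {I : Set ι} (f : ι → α) (hI : ¬ I.Countable)
    (hfib : ∀ a, {i ∈ I | f i = a}.Countable) : ¬ (f '' I).Countable := fun him =>
  hI <| (him.biUnion fun a _ => hfib a).mono fun _ hi =>
    mem_biUnion (t := fun a => {i ∈ I | f i = a}) (mem_image_of_mem f hi) ⟨hi, rfl⟩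

end DeltaSystem

section Sunflower

variable {V : Type*}

def IsSunflower (I : Set (Set V)) (S : Set V) : Prop :=
  I.Pairwise fun e e' => e ∩ e' = S

theorem IsSunflower.kernel_subset {I : Set (Set V)} {S e : Set V} (hI : IsSunflower I S)
    (hnt : I.Nontrivial) (he : e ∈ I) : S ⊆ e := by
  obtain ⟨e', he', hne⟩ := hnt.exists_ne e
  rw [← hI he he' hne.symm]
  exact inter_subset_left

theorem IsSunflower.exists_petal_disjoint {I : Set (Set V)} {S F : Set V} (hI : IsSunflower I S)
    (hinf : I.Infinite) (hF : F.Finite) : ∃ e ∈ I, Disjoint (e \ S) F := by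
  by_contra! h
  obtain ⟨x, -⟩ := not_disjoint_iff.1 (h _ hinf.nonempty.some_mem)
  have : Nonempty V := ⟨x⟩
  choose! p hp using fun e he => not_disjoint_iff.1 (h e he)
  obtain ⟨e, he, e', he', hne, hpe⟩ :=
    hinf.exists_ne_map_eq_of_mapsTo (fun e he => (hp e he).2) hF
  exact (hp e he).1.2 (hI he he' hne ▸ ⟨(hp e he).1.1, hpe ▸ (hp e' he').1.1⟩)

theorem inter_eq_inter_of_disjoint_sdiff {s t s' t' : Set V} (hs : s ⊆ t) (hs' : s' ⊆ t')
    (h : Disjoint (t \ s) t') (h' : Disjoint (t' \ s') s) : t ∩ t' = s ∩ s' := by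
  refine Subset.antisymm (fun z ⟨hzt, hzt'⟩ => ?_) (inter_subset_inter hs hs')
  have hzs : z ∈ s := by_contra fun hzs => disjoint_left.1 h ⟨hzt, hzs⟩ hzt'
  exact ⟨hzs, by_contra fun hzs' => disjoint_left.1 h' ⟨hzt', hzs'⟩ hzs⟩

theorem exists_mem_sunflowers_inter_eq {ι : Type*} [Finite ι] {S : ι → Set V}
    {𝓘 : ι → Set (Set V)} (hS : ∀ i, (S i).Finite) (hsf : ∀ i, IsSunflower (𝓘 i) (S i))
    (hinf : ∀ i, (𝓘 i).Infinite) (hfin : ∀ i, ∀ e ∈ 𝓘 i, e.Finite) :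
    ∃ T : ι → Set V, (∀ i, T i ∈ 𝓘 i) ∧ Pairwise fun i j => T i ∩ T j = S i ∩ S j := by
  classical
  have hΩ : (⋃ j, S j).Finite := finite_iUnion hS
  suffices key : ∀ s : Finset ι, ∃ T : ι → Set V, ∀ i ∈ s, T i ∈ 𝓘 i ∧ S i ⊆ T i ∧
      Disjoint (T i \ S i) (⋃ j, S j) ∧ ∀ j ∈ s, i ≠ j → T i ∩ T j = S i ∩ S j by
    have := Fintype.ofFinite ι
    obtain ⟨T, hT⟩ := key Finset.univ
    exact ⟨T, fun i => (hT i (Finset.mem_univ i)).1,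
      fun i j hij => (hT i (Finset.mem_univ i)).2.2.2 j (Finset.mem_univ j) hij⟩
  intro s
  induction s using Finset.induction_on with
  | empty => exact ⟨fun _ => ∅, by simp⟩
  | insert i₀ s hi₀ ih =>
    obtain ⟨T, hT⟩ := ih
    obtain ⟨e, he, hdisj⟩ := (hsf i₀).exists_petal_disjoint (hinf i₀)
      (hΩ.union (s.finite_toSet.biUnion fun j hj => hfin j (T j) (hT j hj).1))
    have hSe : S i₀ ⊆ e := (hsf i₀).kernel_subset (hinf i₀).nontrivial he
    have hnew : ∀ j ∈ s, e ∩ T j = S i₀ ∩ S j := fun j hj =>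
      inter_eq_inter_of_disjoint_sdiff hSe (hT j hj).2.1
        (hdisj.mono_right (subset_union_of_subset_right (subset_biUnion_of_mem (u := T) hj) _))
        ((hT j hj).2.2.1.mono_right (subset_iUnion S i₀))
    have hne : ∀ j ∈ s, j ≠ i₀ := fun j hj h => hi₀ (h ▸ hj)
    refine ⟨update T i₀ e, fun i hi => ?_⟩
    rcases Finset.mem_insert.1 hi with rfl | his
    · refine ⟨by simpa using he, by simpa using hSe,
        by simpa using hdisj.mono_right subset_union_left, fun j hj hij => ?_⟩
      rcases Finset.mem_insert.1 hj with rfl | hj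
      · exact absurd rfl hij
      · simpa [hne j hj] using hnew j hj
    · simp only [update_of_ne (hne i his)]
      refine ⟨(hT i his).1, (hT i his).2.1, (hT i his).2.2.1, fun j hj hij => ?_⟩
      rcases Finset.mem_insert.1 hj with rfl | hj
      · simpa [inter_comm] using hnew i his
      · simpa [hne j hj] using (hT i his).2.2.2 j hj hij

end Sunflower

section Expansion

variable {V : Type u}

theorem pair_inter_pair_eq_singleton {a b c : V} (h : a ≠ c) :
    ({a, b} : Set V) ∩ {b, c} = {b} := by
  ext z
  simp only [mem_inter_iff, mem_insert_iff, mem_singleton_iff]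
  constructor
  · rintro ⟨rfl | rfl, h | h⟩ <;> simp_all
  · rintro rfl
    simp

theorem pair_inter_pair_eq_empty {a b c d : V} (hac : a ≠ c) (had : a ≠ d) (hbc : b ≠ c)
    (hbd : b ≠ d) : ({a, b} : Set V) ∩ {c, d} = ∅ := by
  ext z
  simp only [mem_inter_iff, mem_insert_iff, mem_singleton_iff, mem_empty_iff_false, iff_false]
  rintro ⟨rfl | rfl, rfl | rfl⟩ <;> simp_all

theorem ContainsExpansionCycle.mono {k l : ℕ} {E E' : Set (Set V)}
    (h : ContainsExpansionCycle k l E) (hEE' : E ⊆ E') : ContainsExpansionCycle k l E' :=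
  let ⟨x, e, hx, he, hxe, hint⟩ := h
  ⟨x, e, hx, fun i => hEE' (he i), hxe, hint⟩

theorem containsExpansionCycle_of_inter {k l : ℕ} (hl : 3 ≤ l) {E : Set (Set V)}
    (x : ZMod l → V) (e : ZMod l → Set V) (hx : Injective x) (he : ∀ i, e i ∈ E)
    (hxe : ∀ i, x i ∈ e i ∧ x (i + 1) ∈ e i) (hadj : ∀ i, e i ∩ e (i + 1) = {x (i + 1)})
    (hfar : ∀ i j, i ≠ j → j ≠ i + 1 → i ≠ j + 1 → e i ∩ e j = ∅) :
    ContainsExpansionCycle k l E := by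
  have : Fact (1 < l) := ⟨by omega⟩
  have htwo : ∀ i : ZMod l, i ≠ i + 1 + 1 := fun i h => by
    have : ((2 : ℕ) : ZMod l) = 0 := by
      rw [Nat.cast_ofNat]; linear_combination -h
    rw [ZMod.natCast_eq_zero_iff] at this
    exact absurd (Nat.le_of_dvd two_pos this) (by omega)
  refine ⟨x, e, hx, he, hxe, fun i j hij => ?_⟩
  by_cases hj : j = i + 1
  · subst hj
    rw [hadj, pair_inter_pair_eq_singleton (hx.ne (htwo i))]
  by_cases hi : i = j + 1
  · subst hi
    rw [inter_comm, hadj, inter_comm, pair_inter_pair_eq_singleton (hx.ne (htwo j))]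
  rw [hfar i j hij hj hi, pair_inter_pair_eq_empty (hx.ne hij) (hx.ne hi)
    (hx.ne fun h => hj h.symm) (hx.ne fun h => hij (add_right_cancel h))]

theorem ContainsExpansionCycle.of_sunflower_kernels {j k l : ℕ} [NeZero l]
    {E K : Set (Set V)} (hK : ContainsExpansionCycle j l K) (hE : ∀ e ∈ E, e.Finite)
    (hker : ∀ S ∈ K, S.Finite ∧ ∃ I ⊆ E, I.Infinite ∧ IsSunflower I S) :
    ContainsExpansionCycle k l E := by
  obtain ⟨x, S, hx, hSK, hxS, hSint⟩ := hK
  choose hSfin I hIE hIinf hIsf using hker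
  obtain ⟨T, hTI, hT⟩ := exists_mem_sunflowers_inter_eq (fun i => hSfin _ (hSK i))
    (fun i => hIsf _ (hSK i)) (fun i => hIinf _ (hSK i)) fun i e he => hE e (hIE _ (hSK i) he)
  have hST : ∀ i, S i ⊆ T i := fun i =>
    (hIsf _ (hSK i)).kernel_subset (hIinf _ _).nontrivial (hTI i)
  exact ⟨x, T, hx, fun i => hIE _ _ (hTI i), fun i => ⟨hST i (hxS i).1, hST i (hxS i).2⟩,
    fun i j hij => (hT hij).trans (hSint i j hij)⟩

end Expansion

section Bipartite

variable {V : Type u}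

structure IsCompleteBipartiteExpansion {α β : Type*} (E : Set (Set V)) (v : α → V) (w : β → V)
    (F : α → β → Set V) : Prop where
  injective_left : Injective v
  injective_right : Injective w
  left_ne_right : ∀ t i, v t ≠ w i
  mem : ∀ t i, F t i ∈ E
  left_mem : ∀ t i, v t ∈ F t i
  right_mem : ∀ t i, w i ∈ F t i
  inter_of_left_eq : ∀ t, Pairwise fun i j => F t i ∩ F t j = {v t}
  inter_of_right_eq : ∀ i, Pairwise fun t s => F t i ∩ F s i = {w i}
  inter_of_ne : ∀ t s i j, t ≠ s → i ≠ j → F t i ∩ F s j = ∅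

variable {m : ℕ}

theorem ZMod.two_mul_natCast_eq {a b : ℕ} (h : (a : ZMod m) = b) :
    2 * (a : ZMod (2 * m)) = 2 * b := by
  rw [ZMod.natCast_eq_natCast_iff] at h
  exact_mod_cast (ZMod.natCast_eq_natCast_iff _ _ _).2 (h.mul_left' 2)

theorem ZMod.exists_eq_two_mul_or [NeZero m] (i : ZMod m) :
    ∃ a : ℕ, i = 2 * a ∨ i = 2 * a + 1 := by
  obtain ⟨a, ha | ha⟩ := Nat.even_or_odd' i.val <;> refine ⟨a, ?_⟩ <;>
    [left; right] <;> rw [← ZMod.natCast_zmod_val i, ha] <;> push_cast <;> rfl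

theorem Function.Periodic.apply_val_natCast {α : Type*} {f : ℕ → α} (hf : Periodic f m)
    (n : ℕ) : f (n : ZMod m).val = f n := by
  rw [ZMod.val_natCast, hf.map_mod_nat]

/-- Step `n` of the closed walk `w 0, v 0, w 1, v 1, …` through the complete bipartite graph;
`bipartiteWalkEdge F n` is the edge from step `n` to step `n + 1`. -/
def bipartiteWalkVertex (v w : ZMod m → V) (n : ℕ) : V :=
  if Even n then w (n / 2 : ℕ) else v (n / 2 : ℕ)

def bipartiteWalkEdge (F : ZMod m → ZMod m → Set V) (n : ℕ) : Set V :=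
  if Even n then F (n / 2 : ℕ) (n / 2 : ℕ) else F (n / 2 : ℕ) (n / 2 + 1 : ℕ)

theorem periodic_bipartiteWalkVertex (v w : ZMod m → V) :
    Periodic (bipartiteWalkVertex v w) (2 * m) := fun n => by
  simp [bipartiteWalkVertex, Nat.even_add, show (n + 2 * m) / 2 = n / 2 + m by omega]

theorem periodic_bipartiteWalkEdge (F : ZMod m → ZMod m → Set V) :
    Periodic (bipartiteWalkEdge F) (2 * m) := fun n => by
  simp [bipartiteWalkEdge, Nat.even_add, show (n + 2 * m) / 2 = n / 2 + m by omega]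

theorem bipartiteWalkVertex_val_two_mul (v w : ZMod m → V) (a : ℕ) :
    bipartiteWalkVertex v w (2 * a : ZMod (2 * m)).val = w a := by
  simpa [bipartiteWalkVertex] using (periodic_bipartiteWalkVertex v w).apply_val_natCast (2 * a)

theorem bipartiteWalkVertex_val_two_mul_add_one (v w : ZMod m → V) (a : ℕ) :
    bipartiteWalkVertex v w (2 * a + 1 : ZMod (2 * m)).val = v a := by
  simpa [bipartiteWalkVertex, show (2 * a + 1) / 2 = a by omega] using
    (periodic_bipartiteWalkVertex v w).apply_val_natCast (2 * a + 1)

theorem bipartiteWalkEdge_val_two_mul (F : ZMod m → ZMod m → Set V) (a : ℕ) :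
    bipartiteWalkEdge F (2 * a : ZMod (2 * m)).val = F a a := by
  simpa [bipartiteWalkEdge] using (periodic_bipartiteWalkEdge F).apply_val_natCast (2 * a)

theorem bipartiteWalkEdge_val_two_mul_add_one (F : ZMod m → ZMod m → Set V) (a : ℕ) :
    bipartiteWalkEdge F (2 * a + 1 : ZMod (2 * m)).val = F a (a + 1) := by
  simpa [bipartiteWalkEdge, show (2 * a + 1) / 2 = a by omega] using
    (periodic_bipartiteWalkEdge F).apply_val_natCast (2 * a + 1)

end Bipartite

namespace IsCompleteBipartiteExpansion

variable {V : Type u} {m : ℕ} {E : Set (Set V)} {v w : ZMod m → V} {F : ZMod m → ZMod m → Set V}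

theorem injective_bipartiteWalkVertex_val [NeZero m] (h : IsCompleteBipartiteExpansion E v w F) :
    Injective fun i : ZMod (2 * m) => bipartiteWalkVertex v w i.val := by
  intro i j hij
  obtain ⟨a, rfl | rfl⟩ := ZMod.exists_eq_two_mul_or i <;>
    obtain ⟨b, rfl | rfl⟩ := ZMod.exists_eq_two_mul_or j <;>
    simp only [bipartiteWalkVertex_val_two_mul, bipartiteWalkVertex_val_two_mul_add_one] at hij
  · exact ZMod.two_mul_natCast_eq (h.injective_right hij)
  · exact absurd hij.symm (h.left_ne_right _ _)
  · exact absurd hij (h.left_ne_right _ _)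
  · rw [ZMod.two_mul_natCast_eq (h.injective_left hij)]

theorem bipartiteWalkEdge_val_inter_eq_empty [NeZero m]
    (h : IsCompleteBipartiteExpansion E v w F) {i j : ZMod (2 * m)} (hij : i ≠ j) (hj : j ≠ i + 1)
    (hi : i ≠ j + 1) : bipartiteWalkEdge F i.val ∩ bipartiteWalkEdge F j.val = ∅ := by
  have hmixed : ∀ a b : ℕ, (2 * b + 1 : ZMod (2 * m)) ≠ 2 * a + 1 →
      (2 * a : ZMod (2 * m)) ≠ 2 * b + 1 + 1 → F a a ∩ F b (b + 1) = ∅ := fun a b h₁ h₂ =>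
    h.inter_of_ne _ _ _ _ (fun hab => h₁ (by rw [ZMod.two_mul_natCast_eq hab.symm]))
      fun hab => h₂ (by
        rw [show (2 * b + 1 + 1 : ZMod (2 * m)) = 2 * (b + 1 : ℕ) by push_cast; ring,
          ZMod.two_mul_natCast_eq (b := b + 1) (by push_cast; exact hab)])
  obtain ⟨a, rfl | rfl⟩ := ZMod.exists_eq_two_mul_or i <;>
    obtain ⟨b, rfl | rfl⟩ := ZMod.exists_eq_two_mul_or j <;>
    simp only [bipartiteWalkEdge_val_two_mul, bipartiteWalkEdge_val_two_mul_add_one]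
  · have hab : (a : ZMod m) ≠ b := fun hab => hij (ZMod.two_mul_natCast_eq hab)
    exact h.inter_of_ne _ _ _ _ hab hab
  · exact hmixed a b hj hi
  · exact inter_comm (F a (a + 1)) _ ▸ hmixed b a hi hj
  · have hab : (a : ZMod m) ≠ b := fun hab => hij (by rw [ZMod.two_mul_natCast_eq hab])
    exact h.inter_of_ne _ _ _ _ hab fun h' => hab (add_right_cancel h')

theorem containsExpansionCycle {k : ℕ} (hm : 2 ≤ m) (h : IsCompleteBipartiteExpansion E v w F) :
    ContainsExpansionCycle k (2 * m) E := by
  have : NeZero m := ⟨by omega⟩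
  have : Fact (1 < m) := ⟨by omega⟩
  have hnext : ∀ a : ℕ, (2 * a + 1 + 1 : ZMod (2 * m)) = 2 * (a + 1 : ℕ) := fun a => by
    push_cast; ring
  have hne : ∀ a : ZMod m, a ≠ a + 1 := fun a h => one_ne_zero (by linear_combination -h)
  refine containsExpansionCycle_of_inter (by omega) _ (fun i => bipartiteWalkEdge F i.val)
    h.injective_bipartiteWalkVertex_val (fun i => ?_) (fun i => ?_) (fun i => ?_)
    fun i j => h.bipartiteWalkEdge_val_inter_eq_empty
  · obtain ⟨a, rfl | rfl⟩ := ZMod.exists_eq_two_mul_or i <;>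
      simp only [bipartiteWalkEdge_val_two_mul, bipartiteWalkEdge_val_two_mul_add_one, h.mem]
  · obtain ⟨a, rfl | rfl⟩ := ZMod.exists_eq_two_mul_or i
    · simp only [bipartiteWalkVertex_val_two_mul, bipartiteWalkVertex_val_two_mul_add_one,
        bipartiteWalkEdge_val_two_mul]
      exact ⟨h.right_mem _ _, h.left_mem _ _⟩
    · rw [hnext, bipartiteWalkVertex_val_two_mul, bipartiteWalkVertex_val_two_mul_add_one,
        bipartiteWalkEdge_val_two_mul_add_one, Nat.cast_succ]
      exact ⟨h.left_mem _ _, h.right_mem _ _⟩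
  · obtain ⟨a, rfl | rfl⟩ := ZMod.exists_eq_two_mul_or i
    · simp only [bipartiteWalkVertex_val_two_mul_add_one, bipartiteWalkEdge_val_two_mul,
        bipartiteWalkEdge_val_two_mul_add_one]
      exact h.inter_of_left_eq _ (hne _)
    · rw [hnext, bipartiteWalkVertex_val_two_mul, bipartiteWalkEdge_val_two_mul,
        bipartiteWalkEdge_val_two_mul_add_one, Nat.cast_succ]
      exact h.inter_of_right_eq _ (hne _)

end IsCompleteBipartiteExpansion

section Extension

variable {V : Type u} (𝒜 : Set (Set V))

def MonochromaticOn (f : V → ℕ) (s : Set V) (c : ℕ) : Prop :=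
  ∀ x ∈ s, f x = c

def forbiddenColors (g : V → ℕ) (P : Set V) (v : V) : Set ℕ :=
  {c | ∃ e ∈ 𝒜, v ∈ e ∧ e \ {v} ⊆ P ∧ MonochromaticOn g (e \ {v}) c}

def fanColors (f : V → ℕ) (Q : Set V) (v : V) : Set ℕ :=
  {c | ∃ e ∈ 𝒜, v ∈ e ∧ (e \ {v} ∩ Q).Nonempty ∧ MonochromaticOn f (e \ {v}) c}

def IsProperExtension (U P : Set V) (g f : V → ℕ) : Prop :=
  (∀ x ∉ U, f x = g x) ∧ ∀ e ∈ 𝒜, e ⊆ U ∪ P → (e ∩ U).Nonempty → ∀ c, ¬ MonochromaticOn f e c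

def fanCentres {ι : Type*} (w : ι → V) : Set V :=
  {v | (∀ i, v ≠ w i) ∧ ∃ F : ι → Set V, (∀ i, F i ∈ 𝒜 ∧ v ∈ F i ∧ w i ∈ F i) ∧
    Pairwise fun i j => F i ∩ F j = {v}}

variable {𝒜}

theorem forbiddenColors_union_subset {g gb : V → ℕ} {P Q : Set V} (hg : ∀ x ∈ P, gb x = g x)
    (v : V) : forbiddenColors 𝒜 gb (P ∪ Q) v ⊆ forbiddenColors 𝒜 g P v ∪ fanColors 𝒜 gb Q v := by
  rintro c ⟨e, he, hve, hsub, hmono⟩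
  by_cases hQ : (e \ {v} ∩ Q).Nonempty
  · exact Or.inr ⟨e, he, hve, hQ, hmono⟩
  have hP : e \ {v} ⊆ P := fun z hz =>
    (hsub hz).resolve_right fun hzQ => hQ ⟨z, hz, hzQ⟩
  exact Or.inl ⟨e, he, hve, hP, fun z hz => hg z (hP hz) ▸ hmono z hz⟩

/-- Edges through `v` whose other vertices have pairwise distinct colours form a fan at `v`. -/
theorem exists_mem_fanCentres_of_infinite {f : V → ℕ} {Q : Set V} {v : V}
    (h : (fanColors 𝒜 f Q v).Infinite) (ι : Type*) [Finite ι] :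
    ∃ Z : ι → V, Injective Z ∧ (∀ t, Z t ∈ Q) ∧ v ∈ fanCentres 𝒜 Z := by
  obtain ⟨n, ⟨σ⟩⟩ := Finite.exists_equiv_fin ι
  set c : ι → ℕ := fun t => h.natEmbedding _ (σ t)
  have hc : Injective c := fun t s hts =>
    σ.injective (Fin.ext ((h.natEmbedding _).injective (Subtype.ext hts)))
  have hmem : ∀ t, ∃ e ∈ 𝒜, v ∈ e ∧ (e \ {v} ∩ Q).Nonempty ∧ MonochromaticOn f (e \ {v}) (c t) :=
    fun t => (h.natEmbedding _ (σ t)).2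
  choose e he hve hne hmono using hmem
  choose z hz using hne
  have hzc : ∀ t, f (z t) = c t := fun t => hmono t _ (hz t).1
  refine ⟨z, fun t s hts => hc (by rw [← hzc, ← hzc, hts]), fun t => (hz t).2,
    fun t hvz => (hz t).1.2 hvz.symm, e, fun t => ⟨he t, hve t, (hz t).1.1⟩, fun t s hts => ?_⟩
  refine Subset.antisymm (fun y hy => by_contra fun hyv => hts (hc ?_))
    (singleton_subset_iff.2 ⟨hve t, hve s⟩)
  rw [← hmono t y ⟨hy.1, hyv⟩, ← hmono s y ⟨hy.2, hyv⟩]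

theorem finite_fanColors {f : V → ℕ} {Q : Set V} (hQ : Q.Finite) (v : V) :
    (fanColors 𝒜 f Q v).Finite := by
  by_contra h
  obtain ⟨Z, hZ, hZQ, -⟩ := exists_mem_fanCentres_of_infinite h (Fin (Q.ncard + 1))
  have := ncard_le_ncard_of_injOn Z (s := univ) (fun t _ => hZQ t) hZ.injOn hQ
  simp at this

theorem exists_properExtension_of_subsingleton {U P : Set V} (hU : U.Subsingleton) {g : V → ℕ}
    (hg : ∀ v ∈ U, (forbiddenColors 𝒜 g P v).Finite) : ∃ f, IsProperExtension 𝒜 U P g f := by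
  classical
  rcases hU.eq_empty_or_singleton with rfl | ⟨u, rfl⟩
  · exact ⟨g, fun _ _ => rfl, fun _ _ _ ⟨_, _, h⟩ => h.elim⟩
  obtain ⟨c, hc⟩ := (hg u rfl).infinite_compl.nonempty
  refine ⟨update g u c, fun x hx => update_of_ne hx _ _,
    fun e he hsub ⟨_, hue, rfl⟩ c' hmono => hc ?_⟩
  have hc' : c' = c := by rw [← hmono _ hue, update_self]
  subst hc'
  refine ⟨e, he, hue, fun z hz => (hsub hz.1).resolve_left hz.2, fun z hz => ?_⟩
  rw [← update_of_ne hz.2 c' g, hmono z hz.1]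

theorem exists_properExtension_of_layers {ι : Type*} [LinearOrder ι] [WellFoundedLT ι]
    (h𝒜 : ∀ e ∈ 𝒜, e.Finite) {U P : Set V} (hUP : Disjoint U P) {g : V → ℕ} (r : V → ι)
    (hlayer : ∀ b (gb : V → ℕ), (∀ x ∈ P, gb x = g x) →
      ∃ f, IsProperExtension 𝒜 {x ∈ U | r x = b} (P ∪ {x ∈ U | r x < b}) gb f) :
    ∃ f, IsProperExtension 𝒜 U P g f := by
  classical
  -- layer `b` is coloured by `G b`, extending the colourings of the earlier layers
  let G : ι → V → ℕ := wellFounded_lt.fix fun b G' => Classical.choose (hlayer b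
      (fun x => if h : x ∈ U ∧ r x < b then G' (r x) h.2 x else g x)
      fun x hx => dif_neg fun h => disjoint_left.1 hUP h.1 hx)
  have hG : ∀ b, IsProperExtension 𝒜 {x ∈ U | r x = b} (P ∪ {x ∈ U | r x < b})
      (fun x => if x ∈ U ∧ r x < b then G (r x) x else g x) (G b) := fun b => by
    rw [show G b = _ from wellFounded_lt.fix_eq _ b]
    exact Classical.choose_spec (hlayer b _ fun x hx => dif_neg fun h => disjoint_left.1 hUP h.1 hx)
  refine ⟨fun x => if x ∈ U then G (r x) x else g x, fun x hx => if_neg hx,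
    fun e he heU ⟨u, hue, huU⟩ c hmono => ?_⟩
  obtain ⟨xm, ⟨hxme, hxmU⟩, hmax⟩ :=
    exists_max_image (e ∩ U) r ((h𝒜 e he).subset inter_subset_left) ⟨u, hue, huU⟩
  refine (hG (r xm)).2 e he (fun z hz => ?_) ⟨xm, hxme, hxmU, rfl⟩ c fun z hz => ?_
  · by_cases hzU : z ∈ U
    · rcases (hmax z ⟨hz, hzU⟩).lt_or_eq with hlt | heq
      · exact Or.inr (Or.inr ⟨hzU, hlt⟩)
      · exact Or.inl ⟨hzU, heq⟩
    · exact Or.inr (Or.inl ((heU hz).resolve_left hzU))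
  · rw [← hmono z hz]
    by_cases hzU : z ∈ U
    · rcases (hmax z ⟨hz, hzU⟩).lt_or_eq with hlt | heq
      · rw [(hG _).1 z fun h => hlt.ne h.2]
        simp [hzU, hlt]
      · simp [hzU, heq]
    · rw [(hG _).1 z fun h => hzU h.1]
      simp [hzU]

end Extension

section FanHull

variable {V : Type u} (𝒜 : Set (Set V)) (ι : Type)

def fanStep (X : Set V) : Set V :=
  X ∪ ⋃ w : {w : ι → V // Injective w ∧ ∀ i, w i ∈ X}, fanCentres 𝒜 w.1

def fanHull (X : Set V) : Set V :=
  ⋃ n : ℕ, (fanStep 𝒜 ι)^[n] X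

variable {𝒜 ι}

theorem subset_fanStep (X : Set V) : X ⊆ fanStep 𝒜 ι X :=
  subset_union_left

theorem fanStep_mono : Monotone (fanStep 𝒜 ι) := fun _ _ hXY =>
  union_subset_union hXY fun _ hx => by
    obtain ⟨w, hw⟩ := mem_iUnion.1 hx
    exact mem_iUnion.2 ⟨⟨w.1, w.2.1, fun i => hXY (w.2.2 i)⟩, hw⟩

theorem subset_fanHull (X : Set V) : X ⊆ fanHull 𝒜 ι X :=
  subset_iUnion (fun n => (fanStep 𝒜 ι)^[n] X) 0

theorem fanHull_mono : Monotone (fanHull 𝒜 ι) := fun _ _ hXY =>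
  iUnion_mono fun n => (fanStep_mono.iterate n) hXY

theorem fanCentres_subset_fanHull [Finite ι] {X : Set V} {w : ι → V} (hw : Injective w)
    (hwX : ∀ i, w i ∈ fanHull 𝒜 ι X) : fanCentres 𝒜 w ⊆ fanHull 𝒜 ι X := by
  have hmono : Monotone fun n => (fanStep 𝒜 ι)^[n] X := monotone_nat_of_le_succ fun n => by
    rw [iterate_succ_apply']
    exact subset_fanStep _
  choose n hn using fun i => mem_iUnion.1 (hwX i)
  obtain ⟨N, hN⟩ := Finite.exists_le n
  intro x hx
  refine mem_iUnion.2 ⟨N + 1, ?_⟩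
  rw [iterate_succ_apply']
  exact Or.inr (mem_iUnion.2 ⟨⟨w, hw, fun i => hmono (hN i) (hn i)⟩, hx⟩)

theorem mk_fanStep_le [Finite ι] (hX : ∀ w : ι → V, Injective w → (fanCentres 𝒜 w).Countable)
    {Y : Set V} {μ : Cardinal.{u}} (hμ : ℵ₀ ≤ μ) (hY : #Y ≤ μ) : #(fanStep 𝒜 ι Y) ≤ μ := by
  have htuples : #{w : ι → V // Injective w ∧ ∀ i, w i ∈ Y} ≤ μ := calc
    _ ≤ #(ι → Y) := mk_le_of_injective
        (f := fun (w : {w : ι → V // Injective w ∧ ∀ i, w i ∈ Y}) i => (⟨w.1 i, w.2.2 i⟩ : Y))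
        fun w w' h => Subtype.ext (funext fun i => congrArg Subtype.val (congrFun h i))
    _ ≤ μ ^ lift.{u} #ι := by simpa using power_le_power_right hY
    _ ≤ μ := pow_le hμ (lift_lt_aleph0.2 (lt_aleph0_of_finite ι))
  have hcentres : #(⋃ w : {w : ι → V // Injective w ∧ ∀ i, w i ∈ Y}, fanCentres 𝒜 w.1) ≤ μ :=
    calc _ ≤ _ := mk_iUnion_le _
      _ ≤ μ * ℵ₀ := mul_le_mul' htuples (ciSup_le' fun w => mk_le_aleph0_iff.2 (hX w.1 w.2.1))
      _ = μ := mul_eq_left hμ hμ aleph0_ne_zero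
  calc _ ≤ #Y + _ := mk_union_le _ _
    _ ≤ μ + μ := add_le_add hY hcentres
    _ = μ := add_eq_self hμ

theorem mk_fanHull_le [Finite ι] (hX : ∀ w : ι → V, Injective w → (fanCentres 𝒜 w).Countable)
    (X : Set V) : #(fanHull 𝒜 ι X) ≤ max #X ℵ₀ := by
  have hμ : ℵ₀ ≤ max #X ℵ₀ := le_max_right _ _
  have hn : ∀ n, #((fanStep 𝒜 ι)^[n] X) ≤ max #X ℵ₀ := fun n => by
    induction n with
    | zero => exact le_max_left _ _
    | succ n ih => rw [iterate_succ_apply']; exact mk_fanStep_le hX hμ ih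
  have hunion := mk_iUnion_le_lift fun n => (fanStep 𝒜 ι)^[n] X
  simp only [lift_uzero, mk_nat, lift_aleph0] at hunion
  calc _ ≤ _ := hunion
    _ ≤ ℵ₀ * max #X ℵ₀ := mul_le_mul' le_rfl (ciSup_le' hn)
    _ = max #X ℵ₀ := mul_eq_right hμ hμ aleph0_ne_zero

end FanHull

section Rank

variable {V : Type u} {𝒜 : Set (Set V)} {ι : Type}

theorem exists_fanClosed_filtration [Finite ι]
    (hX : ∀ w : ι → V, Injective w → (fanCentres 𝒜 w).Countable) {U : Set V}
    (hU : ¬ U.Countable) :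
    ∃ W : (#U).ord.ToType → Set V, Monotone W ∧ (∀ b, #(W b) < #U) ∧ U ⊆ ⋃ b, W b ∧
      ∀ b (w : ι → V), Injective w → (∀ i, w i ∈ W b) → fanCentres 𝒜 w ⊆ W b := by
  have hU' : ℵ₀ < #U := lt_of_not_ge fun h => hU (countable_coe_iff.1 (mk_le_aleph0_iff.1 h))
  obtain ⟨φ⟩ : Nonempty ((#U).ord.ToType ≃ U) := Cardinal.eq.1 (by simp)
  refine ⟨fun b => fanHull 𝒜 ι (Subtype.val '' (φ '' Iic b)),
    fun b b' h => fanHull_mono (image_mono (image_mono (Iic_subset_Iic.2 h))), fun b => ?_,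
    fun u hu => mem_iUnion.2
      ⟨φ.symm ⟨u, hu⟩, subset_fanHull _ ⟨_, ⟨_, self_mem_Iic, rfl⟩, by simp⟩⟩,
    fun b w hw hwW => fanCentres_subset_fanHull hw hwW⟩
  have hIio : #(Iio b) < #U := by simpa using mk_Iio_lt b (by simp)
  have hIic : #(Iic b) < #U := by
    rw [← Iio_insert]
    exact mk_insert_le.trans_lt (add_lt_of_lt hU'.le hIio (one_lt_aleph0.trans hU'))
  calc _ ≤ _ := mk_fanHull_le hX _
    _ < #U := max_lt ((mk_image_le.trans mk_image_le).trans_lt hIic) hU'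

theorem exists_rank_of_fanClosed [Finite ι] [Nonempty ι] {κ : Type*} [LinearOrder κ]
    [WellFoundedLT κ] [Nonempty κ] {U : Set V} (W : κ → Set V) (hW : Monotone W)
    (hUW : U ⊆ ⋃ b, W b)
    (hclosed : ∀ b (w : ι → V), Injective w → (∀ i, w i ∈ W b) → fanCentres 𝒜 w ⊆ W b) :
    ∃ r : V → κ, (∀ x ∈ U, x ∈ W (r x)) ∧ ∀ x ∈ U, ∀ Z : ι → V, Injective Z →
      (∀ t, Z t ∈ U ∧ r (Z t) < r x) → x ∉ fanCentres 𝒜 Z := by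
  classical
  have hwf : WellFounded ((· < ·) : κ → κ → Prop) := wellFounded_lt
  set r : V → κ := fun x => if h : ∃ b, x ∈ W b then hwf.min _ h else Classical.arbitrary κ
  have hr : ∀ x b, x ∈ W b → x ∈ W (r x) ∧ r x ≤ b := fun x b hb => by
    simp only [r, dif_pos (⟨b, hb⟩ : ∃ b, x ∈ W b)]
    exact ⟨hwf.min_mem {b | x ∈ W b} _, hwf.min_le hb⟩
  have hrU : ∀ x ∈ U, x ∈ W (r x) := fun x hx =>
    have ⟨b, hb⟩ := mem_iUnion.1 (hUW hx)
    (hr x b hb).1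
  refine ⟨r, hrU, fun x _ Z hZ hZx hxZ => ?_⟩
  obtain ⟨t₀, ht₀⟩ := Finite.exists_max fun t => r (Z t)
  have hZW : ∀ t, Z t ∈ W (r (Z t₀)) := fun t => hW (ht₀ t) (hrU _ (hZx t).1)
  exact (hr x _ (hclosed _ Z hZ hZW hxZ)).2.not_gt (hZx t₀).2

end Rank

section CountableColoring

variable {V : Type u} {𝒜 : Set (Set V)} {ι : Type}

/-- Induction on `#U`. A countable `U` is coloured one vertex at a time; an uncountable one layer
by layer along a filtration by fan-closed sets of smaller size, and fan-closedness keeps the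
colours that the earlier layers forbid at a vertex finite. -/
theorem exists_properExtension_of_countable_fanCentres [Finite ι] [Nonempty ι]
    (h𝒜 : ∀ e ∈ 𝒜, e.Finite) (hX : ∀ w : ι → V, Injective w → (fanCentres 𝒜 w).Countable)
    {U P : Set V} (hUP : Disjoint U P) {g : V → ℕ}
    (hg : ∀ v ∈ U, (forbiddenColors 𝒜 g P v).Finite) : ∃ f, IsProperExtension 𝒜 U P g f := by
  induction hκ : #U using WellFoundedLT.induction generalizing U P g with
  | ind κ ih =>
  by_cases hc : U.Countable
  · obtain ⟨r, hr⟩ := countable_iff_exists_injOn.1 hc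
    refine exists_properExtension_of_layers h𝒜 hUP r fun b gb hgb =>
      exists_properExtension_of_subsingleton (fun x hx y hy => hr hx.1 hy.1 (hx.2.trans hy.2.symm))
        fun x hx => ((hg x hx.1).union (finite_fanColors ?_ x)).subset
          (forbiddenColors_union_subset hgb x)
    exact Finite.of_finite_image ((finite_Iio b).subset (image_subset_iff.2 fun x hx => hx.2))
      (hr.mono fun x hx => hx.1)
  obtain ⟨W, hWmono, hWcard, hUW, hWclosed⟩ := exists_fanClosed_filtration hX hc
  obtain ⟨u, hu⟩ : U.Nonempty := nonempty_iff_ne_empty.2 fun h => hc (h ▸ countable_empty)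
  have : Nonempty (#U).ord.ToType := ⟨(mem_iUnion.1 (hUW hu)).choose⟩
  obtain ⟨r, hrW, hrfan⟩ := exists_rank_of_fanClosed W hWmono hUW hWclosed
  refine exists_properExtension_of_layers h𝒜 hUP r fun b gb hgb => ih _ ?_ ?_ (fun x hx => ?_) rfl
  · exact hκ ▸ (mk_le_mk_of_subset fun x hx => hx.2 ▸ hrW x hx.1).trans_lt (hWcard b)
  · exact disjoint_left.2 fun x hx hx' =>
      hx'.elim (disjoint_left.1 hUP hx.1) fun hlt => hlt.2.ne hx.2
  refine ((hg x hx.1).union (by_contra fun hinf => ?_)).subset (forbiddenColors_union_subset hgb x)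
  obtain ⟨Z, hZ, hZQ, hxZ⟩ := exists_mem_fanCentres_of_infinite hinf ι
  exact hrfan x hx.1 Z hZ (fun t => ⟨(hZQ t).1, (hZQ t).2.trans_eq hx.2.symm⟩) hxZ

theorem exists_properColoring_of_countable_fanCentres [Finite ι] [Nonempty ι]
    (h𝒜 : ∀ e ∈ 𝒜, e.Finite ∧ e.Nontrivial)
    (hX : ∀ w : ι → V, Injective w → (fanCentres 𝒜 w).Countable) :
    ∃ f : V → ℕ, IsProperColoring 𝒜 f := by
  obtain ⟨f, -, hf⟩ := exists_properExtension_of_countable_fanCentres (fun e he => (h𝒜 e he).1) hX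
    (disjoint_empty univ) (g := 0) fun v _ => by
      convert finite_empty
      exact eq_empty_of_forall_notMem fun c ⟨e, he, _, hsub, _⟩ =>
        (h𝒜 e he).2.not_subset_singleton (sdiff_eq_empty.1 (subset_empty_iff.1 hsub))
  refine ⟨f, fun e he => ?_⟩
  obtain ⟨x, hx⟩ := (h𝒜 e he).2.nonempty
  by_contra! h
  exact hf e he (by simp) ⟨x, hx, trivial⟩ (f x) fun y hy => h y hy x hx

theorem exists_properColoring_of_forall_exists_subset {ι : Type*} [Finite ι] {E : Set (Set V)}
    (𝒜 : ι → Set (Set V)) (hcol : ∀ i, ∃ f : V → ℕ, IsProperColoring (𝒜 i) f)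
    (hE : ∀ e ∈ E, ∃ i, ∃ S ∈ 𝒜 i, S ⊆ e) : ∃ f : V → ℕ, IsProperColoring E f := by
  choose f hf using hcol
  obtain ⟨φ, hφ⟩ := exists_injective_nat (ι → ℕ)
  refine ⟨fun x => φ fun i => f i x, fun e he => ?_⟩
  obtain ⟨i, S, hS, hSe⟩ := hE e he
  obtain ⟨x, hx, y, hy, hxy⟩ := hf i S hS
  exact ⟨x, hSe hx, y, hSe hy, fun h => hxy (congrFun (hφ h) i)⟩

theorem not_exists_properColoring_nat {E : Set (Set V)}
    (hE : Cardinal.aleph 1 ≤ chromaticNumber V E) : ¬ ∃ f : V → ℕ, IsProperColoring E f := by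
  rintro ⟨f, hf⟩
  have : chromaticNumber V E ≤ ℵ₀ := csInf_le' ⟨ULift ℕ, fun v => ULift.up (f v), by simp,
    fun e he => (hf e he).imp fun _ ⟨hx, y, hy, h⟩ =>
      ⟨hx, y, hy, fun h' => h (congrArg ULift.down h')⟩⟩
  exact (Cardinal.aleph0_lt_aleph_one.trans_le (hE.trans this)).false

end CountableColoring

section Extraction

variable {V : Type u}

def LargeKernelSunflowersCountable (E : Set (Set V)) : Prop :=
  ∀ S : Set V, 2 ≤ S.ncard → ∀ I ⊆ E, IsSunflower I S → I.Countable

variable {E : Set (Set V)} {n : ℕ}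

theorem exists_uncountable_sunflower_singleton {α : Type*} (hE : ∀ e ∈ E, e.Finite ∧ e.ncard ≤ n)
    (hker : LargeKernelSunflowersCountable E) {Z : Set α} (hZ : ¬ Z.Countable) {A : α → Set V}
    (hA : ∀ a ∈ Z, A a ∈ E) (hfib : ∀ s, {a ∈ Z | A a = s}.Countable) {p : V}
    (hp : ∀ a ∈ Z, p ∈ A a) :
    ∃ Z' ⊆ Z, ¬ Z'.Countable ∧ Z'.Pairwise fun a b => A a ∩ A b = {p} := by
  obtain ⟨J, hJZ, hJ, K, hK⟩ := exists_uncountable_deltaSystem n hZ fun a ha => hE _ (hA a ha)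
  obtain ⟨a, ha, b, hb, hab⟩ := (show J.Infinite from fun h => hJ h.countable).nontrivial
  have hpK : p ∈ K := by
    rw [← hK ha hb hab]
    exact ⟨hp a (hJZ ha), hp b (hJZ hb)⟩
  have hKfin : K.Finite := (hE _ (hA a (hJZ ha))).1.subset (hK ha hb hab ▸ inter_subset_left)
  -- a larger kernel would make the uncountable family `A '' J` a forbidden sunflower
  have hK1 : K.ncard ≤ 1 := by
    by_contra! h2
    refine not_countable_image_of_countable_fibres A hJ
      (fun s => (hfib s).mono fun x hx => by exact ⟨hJZ hx.1, hx.2⟩)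
      (hker K h2 (A '' J) ?_ ?_)
    · rintro _ ⟨a, ha, rfl⟩
      exact hA a (hJZ ha)
    · rintro _ ⟨a, ha, rfl⟩ _ ⟨b, hb, rfl⟩ hne
      exact hK ha hb fun h => hne (h ▸ rfl)
  refine ⟨J, hJZ, hJ, fun a ha b hb hab => (hK ha hb hab).trans ?_⟩
  exact eq_singleton_iff_unique_mem.2 ⟨hpK, fun x hx => (ncard_le_one_iff hKfin).1 hK1 hx hpK⟩

theorem exists_uncountable_slotwise_sunflower {α ι : Type*} [Finite ι]
    (hE : ∀ e ∈ E, e.Finite ∧ e.ncard ≤ n) (hker : LargeKernelSunflowersCountable E)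
    {Z : Set α} (hZ : ¬ Z.Countable) {A : α → ι → Set V} {w : ι → V}
    (hA : ∀ a ∈ Z, ∀ i, A a i ∈ E ∧ w i ∈ A a i) (hfib : ∀ i s, {a ∈ Z | A a i = s}.Countable) :
    ∃ Y ⊆ Z, ¬ Y.Countable ∧ ∀ i, Y.Pairwise fun a b => A a i ∩ A b i = {w i} := by
  classical
  have := Fintype.ofFinite ι
  suffices key : ∀ s : Finset ι, ∃ Y ⊆ Z, ¬ Y.Countable ∧
      ∀ i ∈ s, Y.Pairwise fun a b => A a i ∩ A b i = {w i} by
    obtain ⟨Y, hYZ, hY, hYs⟩ := key Finset.univ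
    exact ⟨Y, hYZ, hY, fun i => hYs i (Finset.mem_univ i)⟩
  intro s
  induction s using Finset.induction_on with
  | empty => exact ⟨Z, subset_rfl, hZ, by simp⟩
  | insert i s _ ih =>
    obtain ⟨Y, hYZ, hY, hYs⟩ := ih
    obtain ⟨Y', hY'Y, hY', hY'i⟩ := exists_uncountable_sunflower_singleton hE hker hY
      (A := fun a => A a i) (fun a ha => (hA a (hYZ ha) i).1)
      (fun s => (hfib i s).mono fun a ha => by exact ⟨hYZ ha.1, ha.2⟩)
      fun a ha => (hA a (hYZ ha) i).2
    refine ⟨Y', hY'Y.trans hYZ, hY', fun j hj => ?_⟩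
    rcases Finset.mem_insert.1 hj with rfl | hj
    · exact hY'i
    · exact (hYs j hj).mono hY'Y

theorem exists_uncountable_pairwise_inter_subset_range {α ι : Type*} [Fintype ι] {Y : Set α}
    (hY : ¬ Y.Countable) {A : α → ι → Set V} {w : ι → V}
    (hA : ∀ a ∈ Y, ∀ i, (A a i).Finite ∧ (A a i).ncard ≤ n)
    (hslot : ∀ i, Y.Pairwise fun a b => A a i ∩ A b i = {w i}) :
    ∃ Y' ⊆ Y, ¬ Y'.Countable ∧ Y'.Pairwise fun a b => ∀ i j, A a i ∩ A b j ⊆ range w := by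
  obtain ⟨J, hJY, hJ, R, hR⟩ := exists_uncountable_deltaSystem (Fintype.card ι * n) hY
    (A := fun a => ⋃ i, A a i) fun a ha => ⟨finite_iUnion fun i => (hA a ha i).1,
      (ncard_iUnion_le_of_fintype _).trans
        ((Finset.sum_le_card_nsmul _ _ n fun i _ => (hA a ha i).2).trans_eq
          (by rw [smul_eq_mul, Finset.card_univ]))⟩
  have hJinf : J.Infinite := fun h => hJ h.countable
  -- a kernel vertex lies in a common slot of two members of `J`
  have hRw : R ⊆ range w := by
    intro y hy
    have hyJ : ∀ a ∈ J, ∃ i, y ∈ A a i := fun a ha => by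
      obtain ⟨b, hb, hba⟩ := hJinf.nontrivial.exists_ne a
      rw [← hR ha hb hba.symm] at hy
      exact mem_iUnion.1 hy.1
    obtain ⟨a, ha⟩ := hJinf.nonempty
    have : Nonempty ι := ⟨(hyJ a ha).choose⟩
    choose! slot hslot' using hyJ
    obtain ⟨a, ha, b, hb, hab, hsl⟩ :=
      hJinf.exists_ne_map_eq_of_mapsTo (mapsTo_univ slot J) finite_univ
    have hy' : y ∈ A a (slot a) ∩ A b (slot a) := ⟨hslot' a ha, hsl ▸ hslot' b hb⟩
    rw [hslot _ (hJY ha) (hJY hb) hab] at hy'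
    exact ⟨_, hy'.symm⟩
  refine ⟨J, hJY, hJ, fun a ha b hb hab i j => ?_⟩
  refine (inter_subset_inter (subset_iUnion (A a) i) (subset_iUnion (A b) j)).trans ?_
  exact (hR ha hb hab).symm ▸ hRw

theorem countable_setOf_mem_other_slot {α ι : Type*} [Finite ι] {Y : Set α} {A : α → ι → Set V}
    {w : ι → V} (hw : Injective w) (hslot : ∀ i, Y.Pairwise fun a b => A a i ∩ A b i = {w i}) :
    {a ∈ Y | ∃ i j, i ≠ j ∧ w j ∈ A a i}.Countable := by
  refine (countable_iUnion fun i => countable_iUnion fun j => Subsingleton.countable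
    (s := {a ∈ Y | i ≠ j ∧ w j ∈ A a i}) ?_).mono
    fun a ⟨ha, i, j, hij, h⟩ => mem_iUnion₂.2 ⟨i, j, by exact ⟨ha, hij, h⟩⟩
  rintro a ⟨ha, hij, hja⟩ b ⟨hb, -, hjb⟩
  by_contra hab
  exact hij (hw (hslot i ha hb hab ▸ ⟨hja, hjb⟩ : w j ∈ ({w i} : Set V))).symm

theorem exists_isCompleteBipartiteExpansion {ι : Type} [Fintype ι]
    (hE : ∀ e ∈ E, e.Finite ∧ e.ncard ≤ n) (hker : LargeKernelSunflowersCountable E) {w : ι → V}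
    (hw : Injective w) (hcentres : ¬ (fanCentres E w).Countable) :
    ∃ (v : ι → V) (F : ι → ι → Set V), IsCompleteBipartiteExpansion E v w F := by
  classical
  have hfan : ∀ a ∈ fanCentres E w, ∃ Fa : ι → Set V,
      (∀ i, Fa i ∈ E ∧ a ∈ Fa i ∧ w i ∈ Fa i) ∧ Pairwise fun i j => Fa i ∩ Fa j = {a} :=
    fun a ha => ha.2
  have : Nonempty V :=
    ⟨(show (fanCentres E w).Infinite from fun h => hcentres h.countable).nonempty.some⟩
  choose! Fa hFa hFapw using hfan
  obtain ⟨Y, hYZ, hY, hslot⟩ := exists_uncountable_slotwise_sunflower hE hker hcentres (A := Fa)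
    (fun a ha i => ⟨(hFa a ha i).1, (hFa a ha i).2.2⟩) fun i s => by
      by_cases hs : s.Finite
      · exact hs.countable.mono fun a ha => ha.2 ▸ (hFa a ha.1 i).2.1
      · exact countable_empty.mono fun a ha => absurd (ha.2 ▸ (hE _ (hFa a ha.1 i).1).1) hs
  obtain ⟨Y', hY'Y, hY', hY'w⟩ := exists_uncountable_pairwise_inter_subset_range hY
    (fun a ha i => hE _ (hFa a (hYZ ha) i).1) hslot
  set B := {a ∈ Y' | ∃ i j, i ≠ j ∧ w j ∈ Fa a i}
  have hB : B.Countable := countable_setOf_mem_other_slot hw fun i => (hslot i).mono hY'Y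
  have hinf : (Y' \ B).Infinite := fun h => hY' ((h.countable.union hB).mono fun a ha => by
    by_cases haB : a ∈ B
    · exact Or.inr haB
    · exact Or.inl ⟨ha, haB⟩)
  set v : ι → V := fun t => hinf.natEmbedding _ (Fintype.equivFin ι t)
  have hv : Injective v := fun t s h => (Fintype.equivFin ι).injective
    (Fin.ext ((hinf.natEmbedding _).injective (Subtype.ext h)))
  have hvB : ∀ t, v t ∈ Y' \ B := fun t => (hinf.natEmbedding _ _).2
  have hvY : ∀ t, v t ∈ Y := fun t => hY'Y (hvB t).1
  have hvZ : ∀ t, v t ∈ fanCentres E w := fun t => hYZ (hvY t)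
  have hslot_eq : ∀ t i a, w a ∈ Fa (v t) i → a = i := fun t i a ha =>
    by_contra fun h => (hvB t).2 ⟨(hvB t).1, i, a, Ne.symm h, ha⟩
  refine ⟨v, fun t i => Fa (v t) i, hv, hw, fun t i => (hvZ t).1 i, fun t i => (hFa _ (hvZ t) i).1,
    fun t i => (hFa _ (hvZ t) i).2.1, fun t i => (hFa _ (hvZ t) i).2.2,
    fun t => hFapw _ (hvZ t), fun i t s hts => hslot i (hvY t) (hvY s) (hv.ne hts),
    fun t s i j hts hij => eq_empty_of_forall_notMem fun z hz => ?_⟩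
  obtain ⟨a, rfl⟩ := hY'w (hvB t).1 (hvB s).1 (hv.ne hts) i j hz
  exact hij ((hslot_eq t i a hz.1).symm.trans (hslot_eq s j a hz.2))

end Extraction

section Main

variable {V : Type u}

def sunflowerKernels (E : Set (Set V)) (j : ℕ) : Set (Set V) :=
  {S | S.ncard = j ∧ ∃ I ⊆ E, ¬ I.Countable ∧ IsSunflower I S}

def edgesWithoutKernels (E : Set (Set V)) (k : ℕ) : Set (Set V) :=
  {e ∈ E | ∀ j ∈ Ico 2 k, ∀ S ∈ sunflowerKernels E j, ¬ S ⊆ e}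

theorem largeKernelSunflowersCountable_edgesWithoutKernels {E : Set (Set V)} {k : ℕ}
    (hE : ∀ e ∈ E, e.Finite ∧ e.ncard = k) :
    LargeKernelSunflowersCountable (edgesWithoutKernels E k) := fun S hS I hI hIsf =>
  by_contra fun hIc => by
    obtain ⟨a, ha, b, hb, hab⟩ := (show I.Infinite from fun h => hIc h.countable).nontrivial
    have hSa : S ⊆ a := hIsf.kernel_subset ⟨a, ha, b, hb, hab⟩ ha
    -- `S` is a proper subset of `a`, since `S = a ∩ b` and `a ≠ b` have the same size
    have hSk : S.ncard < k := by
      refine (hE a (hI ha).1).2 ▸ ncard_lt_ncard (hSa.ssubset_of_ne fun hSa' => hab ?_)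
        (hE a (hI ha).1).1
      exact eq_of_subset_of_ncard_le (inter_eq_left.1 ((hIsf ha hb hab).trans hSa'))
        (by rw [(hE a (hI ha).1).2, (hE b (hI hb).1).2]) (hE b (hI hb).1).1
    exact (hI ha).2 _ ⟨hS, hSk⟩ S ⟨rfl, I, fun e he => (hI he).1, hIc, hIsf⟩ hSa

theorem exists_properColoring_of_edgesWithoutKernels {E : Set (Set V)} {k : ℕ}
    (hker : ∀ j ∈ Ico 2 k, ∃ f : V → ℕ, IsProperColoring (sunflowerKernels E j) f)
    (hcol : ∃ f : V → ℕ, IsProperColoring (edgesWithoutKernels E k) f) :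
    ∃ f : V → ℕ, IsProperColoring E f := by
  refine exists_properColoring_of_forall_exists_subset (ι := Option (Ico 2 k))
    (fun o => o.elim (edgesWithoutKernels E k) fun j => sunflowerKernels E j) (fun o => ?_)
    fun e he => ?_
  · cases o with
    | none => exact hcol
    | some j => exact hker j j.2
  · by_cases heh : e ∈ edgesWithoutKernels E k
    · exact ⟨none, e, heh, subset_rfl⟩
    · have : ¬ ∀ j ∈ Ico 2 k, ∀ S ∈ sunflowerKernels E j, ¬ S ⊆ e := fun h => heh ⟨he, h⟩
      push Not at this
      obtain ⟨j, hj, S, hS, hSe⟩ := this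
      exact ⟨some ⟨j, hj⟩, S, hS, hSe⟩

theorem containsExpansionCycle_of_not_colorable {m : ℕ} (hm : 2 ≤ m) (k : ℕ) (hk : 2 ≤ k)
    (E : Set (Set V)) (hE : ∀ e ∈ E, e.ncard = k) (hcol : ¬ ∃ f : V → ℕ, IsProperColoring E f) :
    ContainsExpansionCycle k (2 * m) E := by
  induction k using Nat.strong_induction_on generalizing E with
  | _ k ih =>
  have : NeZero m := ⟨by omega⟩
  have hE' : ∀ e ∈ E, e.Finite ∧ e.ncard = k := fun e he =>
    ⟨finite_of_ncard_pos (by rw [hE e he]; omega), hE e he⟩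
  by_cases hker : ∃ j ∈ Ico 2 k, ¬ ∃ f : V → ℕ, IsProperColoring (sunflowerKernels E j) f
  · obtain ⟨j, ⟨hj2, hjk⟩, hj⟩ := hker
    exact (ih j hjk hj2 _ (fun S hS => hS.1) hj).of_sunflower_kernels (fun e he => (hE' e he).1)
      fun S ⟨hS, I, hIE, hI, hIsf⟩ => ⟨finite_of_ncard_pos (by omega), I, hIE,
        fun h => hI h.countable, hIsf⟩
  push Not at hker
  have hsub : edgesWithoutKernels E k ⊆ E := sep_subset E _
  by_cases hX : ∃ w : ZMod m → V, Injective w ∧ ¬ (fanCentres (edgesWithoutKernels E k) w).Countable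
  · obtain ⟨w, hw, hX⟩ := hX
    obtain ⟨v, F, hvF⟩ := exists_isCompleteBipartiteExpansion (n := k)
      (fun e he => (hE' e (hsub he)).imp_right le_of_eq)
      (largeKernelSunflowersCountable_edgesWithoutKernels hE') hw hX
    exact (hvF.containsExpansionCycle hm).mono hsub
  push Not at hX
  refine absurd (exists_properColoring_of_edgesWithoutKernels hker ?_) hcol
  exact exists_properColoring_of_countable_fanCentres (fun e he =>
    (one_lt_ncard_iff_nontrivial_and_finite.1 (by rw [hE e (hsub he)]; omega)).symm) hX

end Main

/-- For every integer `k ≥ 2` and every even `ℓ ≥ 4`, the `k`-uniform expansion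
`C^{(k)}_ℓ` of the `ℓ`-cycle is obligatory. -/
theorem expansion_even_cycle_obligatory (k l : ℕ) (hk : 2 ≤ k) (hl : 4 ≤ l)
    (hleven : Even l) (V : Type u) (E : Set (Set V)) (hUnif : ∀ e ∈ E, e.ncard = k)
    (hChr : Cardinal.aleph 1 ≤ chromaticNumber V E) :
    ContainsExpansionCycle k l E := by
  obtain ⟨m, rfl⟩ := hleven
  rw [← two_mul]
  exact containsExpansionCycle_of_not_colorable (by omega) k hk E hUnif
    (not_exists_properColoring_nat hChr)
end

section
/- Let k ≥ 3 and n ≥ 1 be integers, set t = kn² + 1, and let ℓ be an integer with 2 ≤ ℓ < k. Suppose that the ℓ-uniform expansion K^{(ℓ)}_{n,n} is obligatory. If H = (V, E) is a k-uniform hypergraph containing no subhypergraph isomorphic to K^{(k)}_{n,n}, then the ℓ-uniform hypergraph H^{(ℓ)} on vertex set V, whose edges are exactly the ℓ-element sets that occur as roots of delta systems of size t in H, satisfies χ(H^{(ℓ)}) ≤ ℵ₀. -/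
open Cardinal

universe u

/-- `(V, E)` contains a copy of the `k`-uniform expansion `K^{(k)}_{n,n}`. -/
def ContainsExpansionKnn (k n : ℕ) {V : Type u} (E : Set (Set V)) : Prop :=
  ∃ (x y : Fin n → V) (e : Fin n → Fin n → Set V),
    Function.Injective (Sum.elim x y) ∧
    (∀ i j, e i j ∈ E) ∧
    (∀ i j, x i ∈ e i j ∧ y j ∈ e i j) ∧
    ∀ i j i' j', (i, j) ≠ (i', j') →
      e i j ∩ e i' j' = ({x i, y j} : Set V) ∩ {x i', y j'}

/-- `d` is the root of a delta system of size `t` in the hypergraph with edge set `E`: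
there are `t` edges whose total intersection is `d` and any two of which intersect
exactly in `d`. -/
def IsRootOfDelta {V : Type u} (E : Set (Set V)) (t : ℕ) (d : Set V) : Prop :=
  ∃ D : Set (Set V), D ⊆ E ∧ D.ncard = t ∧ ⋂₀ D = d ∧
    ∀ e ∈ D, ∀ e' ∈ D, e ≠ e' → e ∩ e' = d

lemma ncard_biUnion_le' {ι : Type*} {V : Type u} (s : Finset ι) (C : ι → Set V)
    (h : ∀ i ∈ s, (C i).Finite) : (⋃ i ∈ s, C i).ncard ≤ ∑ i ∈ s, (C i).ncard := by
  classical
  induction s using Finset.induction_on with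
  | empty => simp
  | @insert a s ha ih =>
    rw [Finset.set_biUnion_insert, Finset.sum_insert ha]
    have h1 : (⋃ i ∈ s, C i).Finite := Set.Finite.biUnion s.finite_toSet
      (fun i hi => h i (Finset.mem_insert_of_mem hi))
    calc (C a ∪ ⋃ i ∈ s, C i).ncard ≤ (C a).ncard + (⋃ i ∈ s, C i).ncard :=
          Set.ncard_union_le _ _
      _ ≤ _ := by
          gcongr
          exact ih (fun i hi => h i (Finset.mem_insert_of_mem hi))

lemma greedy {V : Type u} {E : Set (Set V)} {t : ℕ} (ht : 1 ≤ t) {d : Set V}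
    (hd : IsRootOfDelta E t d) {B : Set V} (hB : B.Finite) (hBcard : B.ncard < t) :
    ∃ e ∈ E, d ⊆ e ∧ (e \ d) ∩ B = ∅ := by
  obtain ⟨D, hDE, hDcard, hDint, hDpair⟩ := hd
  have hDfin : D.Finite := by
    by_contra hinf
    rw [Set.Infinite.ncard hinf] at hDcard
    omega
  by_contra hcon
  push_neg at hcon
  have hnon : ∀ e ∈ D, ((e \ d) ∩ B).Nonempty := by
    intro e he
    have hsub : d ⊆ e := hDint ▸ Set.sInter_subset_of_mem he
    exact hcon e (hDE he) hsub
  have hDne : D.Nonempty := by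
    rw [← Set.ncard_pos hDfin] at *; omega
  obtain ⟨e0, he0⟩ := hDne
  have : Nonempty V := ⟨(hnon e0 he0).choose⟩
  have hch : ∀ e : Set V, ∃ w : V, e ∈ D → w ∈ (e \ d) ∩ B := by
    intro e
    by_cases he : e ∈ D
    · exact ⟨(hnon e he).choose, fun _ => (hnon e he).choose_spec⟩
    · exact ⟨Classical.arbitrary V, fun h => absurd h he⟩
  choose v hv using hch
  have hle : D.ncard ≤ B.ncard := by
    apply Set.ncard_le_ncard_of_injOn v (fun e he => ((hv e) he).2) _ hB
    intro e he e' he' hvv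
    by_contra hne
    have h1 := (hv e) he
    have h2 := (hv e') he'
    have : v e ∈ e ∩ e' := ⟨h1.1.1, hvv ▸ h2.1.1⟩
    rw [hDpair e he e' he' hne] at this
    exact h1.1.2 this
  omega

open Classical in
noncomputable def BadSet {V : Type u} {n : ℕ} (rr : Fin n × Fin n → Set V)
    (ι : Fin n × Fin n → ℕ) (g : Fin n × Fin n → Set V) (q : Fin n × Fin n) : Set V :=
  ⋃ q' ∈ Finset.univ.erase q, (if ι q' < ι q then g q' else rr q')

lemma mem_badset_lt {V : Type u} {n : ℕ} {rr ι g} {q q' : Fin n × Fin n}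
    (h1 : q' ≠ q) (h2 : ι q' < ι q) : g q' ⊆ BadSet (V := V) rr ι g q := by
  intro v hv
  rw [BadSet, Set.mem_iUnion₂]
  exact ⟨q', Finset.mem_erase.mpr ⟨h1, Finset.mem_univ _⟩, by rw [if_pos h2]; exact hv⟩

lemma mem_badset_ge {V : Type u} {n : ℕ} {rr ι g} {q q' : Fin n × Fin n}
    (h1 : q' ≠ q) (h2 : ¬ ι q' < ι q) : rr q' ⊆ BadSet (V := V) rr ι g q := by
  intro v hv
  rw [BadSet, Set.mem_iUnion₂]
  exact ⟨q', Finset.mem_erase.mpr ⟨h1, Finset.mem_univ _⟩, by rw [if_neg h2]; exact hv⟩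

lemma badset_congr {V : Type u} {n : ℕ} {rr ι} {g g' : Fin n × Fin n → Set V}
    {q : Fin n × Fin n} (h : ∀ q', ι q' < ι q → g q' = g' q') :
    BadSet rr ι g q = BadSet rr ι g' q := by
  unfold BadSet
  apply Set.iUnion₂_congr
  intro q' _
  by_cases hlt : ι q' < ι q
  · rw [if_pos hlt, if_pos hlt, h q' hlt]
  · rw [if_neg hlt, if_neg hlt]

lemma expand_knn {V : Type u} {E : Set (Set V)} {k n l : ℕ} (hk : 3 ≤ k) (hn : 1 ≤ n)
    (hl1 : 1 ≤ l) (hlk : l < k) (hUnif : ∀ e ∈ E, e.ncard = k)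
    (h2 : ContainsExpansionKnn l n {f : Set V | f.ncard = l ∧ IsRootOfDelta E (k*n^2+1) f}) :
    ContainsExpansionKnn k n E := by
  classical
  obtain ⟨x, y, r, hinj, hrE, hmem, hint⟩ := h2
  set t := k * n ^ 2 + 1 with htdef
  have finOf : ∀ (s : Set V) (m : ℕ), s.ncard = m → 1 ≤ m → s.Finite := by
    intro s m h h1
    by_contra hinf
    rw [Set.Infinite.ncard hinf] at h; omega
  set rr : Fin n × Fin n → Set V := fun q => r q.1 q.2 with hrr
  set ι : Fin n × Fin n → ℕ := fun q => q.1.val * n + q.2.val with hι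
  have hιinj : Function.Injective ι := by
    rintro ⟨⟨a, ha⟩, ⟨b, hb⟩⟩ ⟨⟨c, hc⟩, ⟨d, hd⟩⟩ h
    simp only [hι] at h
    have hac : a = c := by
      rcases lt_trichotomy a c with h1 | h1 | h1
      · exfalso
        have h2 : (a + 1) * n ≤ c * n := Nat.mul_le_mul_right n (by omega)
        have h3 : (a + 1) * n = a * n + n := by ring
        omega
      · exact h1
      · exfalso
        have h2 : (c + 1) * n ≤ a * n := Nat.mul_le_mul_right n (by omega)
        have h3 : (c + 1) * n = c * n + n := by ring
        omega
    have hbd : b = d := by subst hac; omega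
    simp [Prod.ext_iff, Fin.ext_iff, hac, hbd]
  have hιlt : ∀ q : Fin n × Fin n, ι q < n * n := by
    rintro ⟨⟨a, ha⟩, ⟨b, hb⟩⟩
    simp only [hι]
    calc a * n + b < a * n + n := by omega
      _ = (a + 1) * n := by ring
      _ ≤ n * n := Nat.mul_le_mul_right n (by omega)
  have hrfin : ∀ q : Fin n × Fin n, (rr q).Finite :=
    fun q => finOf _ l (hrE q.1 q.2).1 hl1
  have key : ∀ M : ℕ, ∃ g : Fin n × Fin n → Set V,
      ∀ q, ι q < M → g q ∈ E ∧ rr q ⊆ g q ∧ (g q \ rr q) ∩ BadSet rr ι g q = ∅ := by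
    intro M
    induction M with
    | zero => exact ⟨fun _ => ∅, fun q h => absurd h (by omega)⟩
    | succ M ih =>
      obtain ⟨g, hg⟩ := ih
      by_cases hq0 : ∃ q0, ι q0 = M
      · obtain ⟨q0, hq0⟩ := hq0
        have hterm : ∀ q' ∈ Finset.univ.erase q0,
            ((if ι q' < ι q0 then g q' else rr q') : Set V).Finite ∧
            ((if ι q' < ι q0 then g q' else rr q') : Set V).ncard ≤ k := by
          intro q' _
          by_cases hlt : ι q' < ι q0
          · rw [if_pos hlt]
            have hE := (hg q' (by omega)).1
            exact ⟨finOf _ k (hUnif _ hE) (by omega), le_of_eq (hUnif _ hE)⟩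
          · rw [if_neg hlt]
            exact ⟨hrfin q', by rw [(hrE q'.1 q'.2).1]; omega⟩
        have hfin : (BadSet rr ι g q0).Finite := by
          unfold BadSet
          exact Set.Finite.biUnion (Finset.univ.erase q0).finite_toSet
            (fun q' hq' => (hterm q' hq').1)
        have hcard : (BadSet rr ι g q0).ncard < t := by
          have h1 := ncard_biUnion_le' (Finset.univ.erase q0)
            (fun q' => (if ι q' < ι q0 then g q' else rr q')) (fun q' hq' => (hterm q' hq').1)
          have h2 : ∑ q' ∈ Finset.univ.erase q0,
              ((if ι q' < ι q0 then g q' else rr q') : Set V).ncard ≤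
              (Finset.univ.erase q0).card * k := by
            rw [Finset.card_eq_sum_ones, Finset.sum_mul, ]
            apply Finset.sum_le_sum
            intro q' hq'
            simpa using (hterm q' hq').2
          have h3 : (Finset.univ.erase q0).card = n * n - 1 := by
            rw [Finset.card_erase_of_mem (Finset.mem_univ _), Finset.card_univ]
            simp [Fintype.card_prod]
          have h4 : (n * n - 1) * k < t := by
            have : (n * n - 1) * k ≤ n * n * k := Nat.mul_le_mul_right k (by omega)
            have h5 : n * n * k = k * n ^ 2 := by ring
            omega
          calc (BadSet rr ι g q0).ncard ≤ _ := h1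
            _ ≤ (Finset.univ.erase q0).card * k := h2
            _ < t := by rw [h3]; exact h4
        obtain ⟨e, heE, hde, hB⟩ := greedy (by omega) (hrE q0.1 q0.2).2 hfin hcard
        refine ⟨Function.update g q0 e, ?_⟩
        have hupd : ∀ q', ι q' < M → Function.update g q0 e q' = g q' := by
          intro q' h
          apply Function.update_of_ne
          intro hh; rw [hh, hq0] at h; omega
        intro q hqM
        by_cases hcase : ι q = M
        · have hqq0 : q = q0 := hιinj (by rw [hcase, hq0])
          rw [hqq0]
          have hBadeq : BadSet rr ι (Function.update g q0 e) q0 = BadSet rr ι g q0 :=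
            badset_congr (fun q' h => hupd q' (by omega))
          refine ⟨by rw [Function.update_self]; exact heE,
            by rw [Function.update_self]; exact hde, ?_⟩
          rw [Function.update_self, hBadeq]
          exact hB
        · have hqM' : ι q < M := by omega
          have hBadeq : BadSet rr ι (Function.update g q0 e) q = BadSet rr ι g q :=
            badset_congr (fun q' h => hupd q' (by omega))
          rw [hupd q hqM', hBadeq]
          exact hg q hqM'
      · push_neg at hq0
        refine ⟨g, fun q h => hg q ?_⟩
        have := hq0 q
        omega
  obtain ⟨g, hg⟩ := key (n * n)
  have hgq : ∀ q, g q ∈ E ∧ rr q ⊆ g q ∧ (g q \ rr q) ∩ BadSet rr ι g q = ∅ :=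
    fun q => hg q (hιlt q)
  have main : ∀ q q' : Fin n × Fin n, ι q' < ι q → g q ∩ g q' = rr q ∩ rr q' := by
    intro q q' hlt
    have hne : q' ≠ q := fun h => by rw [h] at hlt; omega
    apply Set.Subset.antisymm
    · intro v hv
      have hvq : v ∈ rr q := by
        by_contra hno
        have : v ∈ (g q \ rr q) ∩ BadSet rr ι g q :=
          ⟨⟨hv.1, hno⟩, mem_badset_lt hne hlt hv.2⟩
        rw [(hgq q).2.2] at this
        exact this
      have hvq' : v ∈ rr q' := by
        by_contra hno
        have : v ∈ (g q' \ rr q') ∩ BadSet rr ι g q' :=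
          ⟨⟨hv.2, hno⟩, mem_badset_ge (fun h => hne h.symm) (by omega) hvq⟩
        rw [(hgq q').2.2] at this
        exact this
      exact ⟨hvq, hvq'⟩
    · exact Set.inter_subset_inter (hgq q).2.1 (hgq q').2.1
  refine ⟨x, y, fun i j => g (i, j), hinj, fun i j => (hgq (i, j)).1, ?_, ?_⟩
  · intro i j
    exact ⟨(hgq (i, j)).2.1 (hmem i j).1, (hgq (i, j)).2.1 (hmem i j).2⟩
  · intro i j i' j' hne
    have hιne : ι (i, j) ≠ ι (i', j') := fun h => hne (hιinj h)
    rcases lt_or_gt_of_ne hιne with h | h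
    · rw [Set.inter_comm, main (i', j') (i, j) h, Set.inter_comm]
      exact hint i j i' j' hne
    · rw [main (i, j) (i', j') h]
      exact hint i j i' j' hne

/-- **Claim 2.1.** -/
theorem chromaticNumber_roots_le_aleph0 (k n l : ℕ) (hk : 3 ≤ k) (hn : 1 ≤ n)
    (hl2 : 2 ≤ l) (hlk : l < k)
    {V : Type u} (E : Set (Set V)) (hUnif : ∀ e ∈ E, e.ncard = k)
    (hfree : ¬ ContainsExpansionKnn k n E)
    (hObl : ∀ (W : Type u) (E' : Set (Set W)), (∀ e ∈ E', e.ncard = l) →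
      Cardinal.aleph 1 ≤ chromaticNumber W E' → ContainsExpansionKnn l n E') :
    chromaticNumber V
      {f : Set V | f.ncard = l ∧ IsRootOfDelta E (k * n ^ 2 + 1) f} ≤
      Cardinal.aleph0 := by
  by_contra h
  have h1 : Cardinal.aleph 1 ≤ chromaticNumber V
      {f : Set V | f.ncard = l ∧ IsRootOfDelta E (k * n ^ 2 + 1) f} := by
    have he : Cardinal.aleph 1 = Order.succ Cardinal.aleph0 := by
      rw [← Cardinal.aleph_zero, ← Cardinal.aleph_succ]; norm_num
    rw [he, Order.succ_le_iff]
    exact not_le.mp h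
  have h2 := hObl V _ (fun e he => he.1) h1
  exact hfree (expand_knn hk hn (by omega) hlk hUnif h2)
end

section
/- Let k ≥ 2, ℓ < k, m ≥ 1 be integers and set t = km + 1. Let H = (V, E) be a k-uniform hypergraph and let f_1, …, f_m be ℓ-element subsets of V such that each f_i is the root of a delta system of size t in H. Then there exist edges e_1, …, e_m ∈ E such that f_i ⊆ e_i for every i, and e_i ∩ e_j = f_i ∩ f_j for all distinct i, j. In particular, if f_1, …, f_{n²} (with m = n²) form a copy of K^{(ℓ)}_{n,n}, then e_1, …, e_{n²} form a copy of K^{(k)}_{n,n} in H. -/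
/-!
Replace the roots by edges one at a time. While replacing `f i`, the sets currently
assigned to the other indices have at most `(m - 1) k < t` vertices outside `f i`,
and these lie in pairwise disjoint petals `e \ f i` of the delta system, each vertex in
at most one. So some petal `e ⊇ f i` avoids all of them, and then `e` meets every
other current set only inside `f i`, which keeps all pairwise intersections unchanged.
-/

open Cardinal

universe u

variable {V ι : Type*}

theorem IsRootOfDelta.exists_mem_disjoint {E : Set (Set V)} {t : ℕ} {d B : Set V}
    (h : IsRootOfDelta E t d) (hBd : Disjoint B d) (hB : B.encard < t) :
    ∃ e ∈ E, d ⊆ e ∧ Disjoint e B := by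
  obtain ⟨D, hDE, hDcard, hDint, hDpair⟩ := h
  by_contra! hmeet
  have hmeet' : ∀ e ∈ D, (e ∩ B).Nonempty := fun e he =>
    Set.not_disjoint_iff_nonempty_inter.mp
      (hmeet e (hDE he) (hDint ▸ Set.sInter_subset_of_mem he))
  have hDpos : 0 < D.ncard := hDcard ▸ (by exact_mod_cast pos_of_gt hB)
  have hDfin : D.Finite := Set.finite_of_ncard_pos hDpos
  obtain ⟨e₀, he₀⟩ := Set.nonempty_of_ncard_ne_zero hDpos.ne'
  have : Nonempty V := ⟨(hmeet' e₀ he₀).some⟩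
  choose! φ hφ using hmeet'
  have hinj : Set.InjOn φ D := by
    intro e he e' he' hφe
    by_contra hne
    have hφd : φ e ∈ d :=
      hDpair e he e' he' hne ▸ ⟨(hφ e he).1, hφe ▸ (hφ e' he').1⟩
    exact Set.disjoint_left.mp hBd (hφ e he).2 hφd
  have hDB : D.encard ≤ B.encard :=
    Set.encard_le_encard_of_injOn (fun e he => (hφ e he).2) hinj
  rw [← hDfin.cast_ncard_eq, hDcard] at hDB
  exact hDB.not_gt hB

theorem IsRootOfDelta.exists_superset_mem {E : Set (Set V)} {t : ℕ} {d : Set V}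
    (h : IsRootOfDelta E t d) (ht : 0 < t) : ∃ e ∈ E, d ⊆ e := by
  obtain ⟨e, he, hde, -⟩ := h.exists_mem_disjoint (Set.empty_disjoint d) (by simpa using ht)
  exact ⟨e, he, hde⟩

structure IsInterPreservingExtension (k : ℕ) (f g : ι → Set V) : Prop where
  subset : ∀ i, f i ⊆ g i
  encard_le : ∀ i, (g i).encard ≤ k
  inter_eq : Pairwise fun i j => g i ∩ g j = f i ∩ f j

namespace IsInterPreservingExtension

variable {k : ℕ} {f g : ι → Set V}

theorem refl (hf : ∀ i, (f i).encard ≤ k) : IsInterPreservingExtension k f f :=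
  ⟨fun _ => subset_rfl, hf, fun _ _ _ => rfl⟩

theorem encard_iUnion_ne_sdiff_le [Fintype ι] [DecidableEq ι]
    (hg : IsInterPreservingExtension k f g) (i : ι) :
    ((⋃ j ∈ Finset.univ.erase i, g j) \ f i).encard ≤ (Fintype.card ι - 1) * k := by
  calc ((⋃ j ∈ Finset.univ.erase i, g j) \ f i).encard
      ≤ (⋃ j ∈ Finset.univ.erase i, g j).encard := Set.encard_le_encard Set.sdiff_subset
    _ ≤ ∑ j ∈ Finset.univ.erase i, (g j).encard := Finset.set_encard_biUnion_le _ _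
    _ ≤ (Finset.univ.erase i).card • (k : ℕ∞) :=
        Finset.sum_le_card_nsmul _ _ _ fun j _ => hg.encard_le j
    _ = ((Fintype.card ι - 1) * k : ℕ) := by
        rw [Finset.card_erase_of_mem (Finset.mem_univ i), Finset.card_univ, nsmul_eq_mul]
        norm_cast

theorem update [DecidableEq ι] (hg : IsInterPreservingExtension k f g) {i : ι} {e : Set V}
    (hfe : f i ⊆ e) (hek : e.encard ≤ k) (he : ∀ j ≠ i, Disjoint e (g j \ f i)) :
    IsInterPreservingExtension k f (Function.update g i e) := by
  have hinter : ∀ j ≠ i, e ∩ g j = f i ∩ f j := by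
    intro j hji
    refine Set.Subset.antisymm (fun x ⟨hxe, hxg⟩ => ?_)
      (Set.inter_subset_inter hfe (hg.subset j))
    have hxf : x ∈ f i := by
      by_contra hxf
      exact Set.disjoint_left.mp (he j hji) hxe ⟨hxg, hxf⟩
    exact hg.inter_eq hji.symm ▸ ⟨hg.subset i hxf, hxg⟩
  refine ⟨fun j => ?_, fun j => ?_, fun a b hab => ?_⟩
  · rcases eq_or_ne j i with rfl | hji
    · simpa using hfe
    · simpa [hji] using hg.subset j
  · rcases eq_or_ne j i with rfl | hji
    · simpa using hek
    · simpa [hji] using hg.encard_le j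
  · by_cases hai : a = i <;> by_cases hbi : b = i
    · exact absurd (hai.trans hbi.symm) hab
    · subst hai
      simpa [hbi] using hinter b hbi
    · subst hbi
      simpa [hai, Set.inter_comm] using hinter a hai
    · simpa [hai, hbi] using hg.inter_eq hab

end IsInterPreservingExtension

theorem exists_extension_of_isRootOfDelta [Fintype ι] {E : Set (Set V)} {k t : ℕ}
    (hE : ∀ e ∈ E, e.encard ≤ k) {f : ι → Set V} (hroot : ∀ i, IsRootOfDelta E t (f i))
    (ht : (Fintype.card ι - 1) * k < t) :
    ∃ e : ι → Set V, (∀ i, e i ∈ E) ∧ IsInterPreservingExtension k f e := by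
  classical
  suffices ∀ S : Finset ι, ∃ g, IsInterPreservingExtension k f g ∧ ∀ i ∈ S, g i ∈ E by
    obtain ⟨g, hg, hgE⟩ := this Finset.univ
    exact ⟨g, fun i => hgE i (Finset.mem_univ i), hg⟩
  intro S
  induction S using Finset.induction_on with
  | empty =>
    refine ⟨f, IsInterPreservingExtension.refl fun i => ?_, by simp⟩
    obtain ⟨e, he, hfe⟩ := (hroot i).exists_superset_mem (Nat.zero_le _ |>.trans_lt ht)
    exact (Set.encard_le_encard hfe).trans (hE e he)
  | insert i S _ ih =>
    obtain ⟨g, hg, hgE⟩ := ih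
    obtain ⟨e, heE, hfe, hdisj⟩ := (hroot i).exists_mem_disjoint Set.disjoint_sdiff_left
      ((hg.encard_iUnion_ne_sdiff_le i).trans_lt (by exact_mod_cast ht))
    refine ⟨Function.update g i e, hg.update hfe (hE e heE) fun j hji => hdisj.mono_right
      (Set.sdiff_subset_sdiff_left (Set.subset_biUnion_of_mem (by simpa using hji))), ?_⟩
    intro j hj
    by_cases hji : j = i
    · subst hji
      simpa using heE
    · simpa [hji] using hgE j ((Finset.mem_insert.mp hj).resolve_left hji)

theorem exists_extension_of_roots_general {V : Type u} (k m : ℕ) (hk : 2 ≤ k)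
    (E : Set (Set V)) (hUnif : ∀ e ∈ E, e.ncard = k)
    (f : Fin m → Set V)
    (hroot : ∀ i, IsRootOfDelta E (k * m + 1) (f i)) :
    ∃ e : Fin m → Set V,
      (∀ i, e i ∈ E) ∧ (∀ i, f i ⊆ e i) ∧
      (∀ i j, i ≠ j → e i ∩ e j = f i ∩ f j) ∧
      -- in particular: if the `f`'s form a copy of `K^{(ℓ)}_{n,n}`,
      -- then the `e`'s form a copy of `K^{(k)}_{n,n}`
      ∀ (n : ℕ) (σ : Fin n × Fin n → Fin m), Function.Bijective σ →
        ∀ x y : Fin n → V, Function.Injective (Sum.elim x y) →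
          (∀ p : Fin n × Fin n, x p.1 ∈ f (σ p) ∧ y p.2 ∈ f (σ p)) →
          (∀ p q : Fin n × Fin n, p ≠ q →
            f (σ p) ∩ f (σ q) = ({x p.1, y p.2} : Set V) ∩ {x q.1, y q.2}) →
          (∀ p : Fin n × Fin n, x p.1 ∈ e (σ p) ∧ y p.2 ∈ e (σ p)) ∧
            ∀ p q : Fin n × Fin n, p ≠ q →
              e (σ p) ∩ e (σ q) = ({x p.1, y p.2} : Set V) ∩ {x q.1, y q.2} := by
  have hE : ∀ e ∈ E, e.encard ≤ k := fun e he => by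
    have hfin : e.Finite := Set.finite_of_ncard_pos (by rw [hUnif e he]; omega)
    rw [← hfin.cast_ncard_eq, hUnif e he]
  have ht : (Fintype.card (Fin m) - 1) * k < k * m + 1 := by
    rw [Fintype.card_fin, Nat.mul_comm]
    exact Nat.lt_succ_of_le (Nat.mul_le_mul_left k (Nat.sub_le m 1))
  obtain ⟨e, heE, he⟩ := exists_extension_of_isRootOfDelta hE hroot ht
  refine ⟨e, heE, he.subset, fun i j hij => he.inter_eq hij, ?_⟩
  intro n σ hσ x y _ hmem hinter
  exact ⟨fun p => ⟨he.subset _ (hmem p).1, he.subset _ (hmem p).2⟩, fun p q hpq =>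
    (he.inter_eq (hσ.injective.ne hpq)).trans (hinter p q hpq)⟩

/-- If `f 1, …, f m` are `ℓ`-element sets, each the root of a delta system of size
`t = k m + 1` in the `k`-uniform hypergraph `H = (V, E)`, then they extend to edges
`e i ⊇ f i` of `H` with `e i ∩ e j = f i ∩ f j` for all `i ≠ j`.  In particular, if
the `f`'s form a copy of `K^{(ℓ)}_{n,n}` (with `m = n²`), then the `e`'s form a copy
of `K^{(k)}_{n,n}` in `H`. -/
theorem exists_extension_of_roots {V : Type u} (k l m : ℕ) (hk : 2 ≤ k)
    (hlk : l < k) (hm : 1 ≤ m)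
    (E : Set (Set V)) (hUnif : ∀ e ∈ E, e.ncard = k)
    (f : Fin m → Set V) (hf : ∀ i, (f i).ncard = l)
    (hroot : ∀ i, IsRootOfDelta E (k * m + 1) (f i)) :
    ∃ e : Fin m → Set V,
      (∀ i, e i ∈ E) ∧ (∀ i, f i ⊆ e i) ∧
      (∀ i j, i ≠ j → e i ∩ e j = f i ∩ f j) ∧
      -- in particular: if the `f`'s form a copy of `K^{(ℓ)}_{n,n}`,
      -- then the `e`'s form a copy of `K^{(k)}_{n,n}`
      ∀ (n : ℕ) (σ : Fin n × Fin n → Fin m), Function.Bijective σ →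
        ∀ x y : Fin n → V, Function.Injective (Sum.elim x y) →
          (∀ p : Fin n × Fin n, x p.1 ∈ f (σ p) ∧ y p.2 ∈ f (σ p)) →
          (∀ p q : Fin n × Fin n, p ≠ q →
            f (σ p) ∩ f (σ q) = ({x p.1, y p.2} : Set V) ∩ {x q.1, y q.2}) →
          (∀ p : Fin n × Fin n, x p.1 ∈ e (σ p) ∧ y p.2 ∈ e (σ p)) ∧
            ∀ p q : Fin n × Fin n, p ≠ q →
              e (σ p) ∩ e (σ q) = ({x p.1, y p.2} : Set V) ∩ {x q.1, y q.2} :=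
  exists_extension_of_roots_general k m hk E hUnif f hroot
end

section
/- Let k ≥ 2 and t ≥ 2 be integers, let H = (V, E) be a k-uniform hypergraph, and regard V as a first-order structure in the language with a single k-ary relation symbol R, interpreted by: R(v_1, …, v_k) holds if and only if v_1, …, v_k are distinct and {v_1, …, v_k} ∈ E. Let M ⊆ V be the universe of an elementary substructure of this structure, and let f ⊆ M be a set with |f| ≤ k − 1 which is not the root of a delta system of size t in H. Then there is no edge e ∈ E with e ∩ M = f. -/
open Cardinal FirstOrder

universe u

/-- The first-order language with a single `k`-ary relation symbol. -/
def hyperLang (k : ℕ) : FirstOrder.Language :=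
  { Functions := fun _ => Empty
    Relations := fun n => PLift (n = k) }

/-- The `hyperLang k`-structure on the vertex set of a `k`-uniform hypergraph `(V, E)`:
the relation symbol holds of a tuple `v₁, …, v_k` iff the `vᵢ` are distinct and
`{v₁, …, v_k} ∈ E`. -/
def hyperStructure {V : Type u} (k : ℕ) (E : Set (Set V)) : (hyperLang k).Structure V where
  funMap := fun f _ => f.elim
  RelMap := fun _ v => Function.Injective v ∧ Set.range v ∈ E

/-- The induced structure on a subset `M` of the vertex set. -/
def hyperSubStructure {V : Type u} (k : ℕ) (E : Set (Set V)) (M : Set V) :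
    (hyperLang k).Structure M where
  funMap := fun f _ => f.elim
  RelMap := fun _ v => Function.Injective (fun i => (v i : V)) ∧
    Set.range (fun i => (v i : V)) ∈ E

/-- `M` is (the universe of) an elementary substructure of `(V; R)`: every first-order
formula with parameters from `M` holds in the induced structure on `M` iff it holds
in `V`. -/
def IsElementarySet {V : Type u} (k : ℕ) (E : Set (Set V)) (M : Set V) : Prop :=
  ∀ (n : ℕ) (φ : (hyperLang k).Formula (Fin n)) (x : Fin n → M),
    @FirstOrder.Language.Formula.Realize (hyperLang k) M (hyperSubStructure k E M)
        (Fin n) φ x ↔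
      @FirstOrder.Language.Formula.Realize (hyperLang k) V (hyperStructure k E)
        (Fin n) φ (fun i => (x i : V))

/-!
Let `e` be an edge with `e ∩ M = f`, and `F` any finite set of vertices. The first-order
formula "there are vertices `z` which together with `f` form an edge and avoid `F ∩ M`" has
parameters in `M` and is witnessed in `V` by `e \ f`, which lies outside `M`; by elementarity
it has a witness inside `M`, i.e. an edge `e' ⊇ f` with `e' ∩ F ⊆ f`. Taking for `F` the union
of the edges found so far, this grows a delta system with root `f` one edge at a time; its
edges are new because `|f| < k`. At size `t` it contradicts the assumption on `f`.
-/

open FirstOrder.Language Structure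

theorem Fin.comp_append {α β : Type*} {m n : ℕ} (g : α → β) (a : Fin m → α)
    (b : Fin n → α) :
    g ∘ Fin.append a b = Fin.append (g ∘ a) (g ∘ b) := by
  ext i
  refine Fin.addCases (fun i => ?_) (fun j => ?_) i <;> simp

theorem Fin.range_append {α : Type*} {m n : ℕ} (a : Fin m → α) (b : Fin n → α) :
    Set.range (Fin.append a b) = Set.range a ∪ Set.range b := by
  rw [← Set.Sum.elim_range, ← Fin.append_comp_sumElim]
  exact (finSumFinEquiv.surjective.range_comp _).symm

section DeltaSystem

variable {V : Type u} {D : Set (Set V)} {d e : Set V}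

def IsDeltaSystem (D : Set (Set V)) (d : Set V) : Prop :=
  (∀ x ∈ D, d ⊆ x) ∧ D.Pairwise fun x y => x ∩ y = d

theorem isDeltaSystem_singleton (hde : d ⊆ e) : IsDeltaSystem {e} d :=
  ⟨fun _ hx => hx ▸ hde, Set.pairwise_singleton _ _⟩

theorem IsDeltaSystem.insert (hD : IsDeltaSystem D d) (hde : d ⊆ e)
    (he : ∀ x ∈ D, e ∩ x ⊆ d) : IsDeltaSystem (insert e D) d := by
  have hmeet : ∀ x ∈ D, e ∩ x = d := fun x hx =>
    (he x hx).antisymm (Set.subset_inter hde (hD.1 x hx))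
  refine ⟨Set.forall_mem_insert.mpr ⟨hde, hD.1⟩,
    Set.pairwise_insert.mpr ⟨hD.2, fun x hx _ => ?_⟩⟩
  exact ⟨hmeet x hx, Set.inter_comm x e ▸ hmeet x hx⟩

theorem IsDeltaSystem.isRootOfDelta {E : Set (Set V)} {t : ℕ} (hD : IsDeltaSystem D d)
    (hDE : D ⊆ E) (hcard : D.ncard = t) (ht : 2 ≤ t) : IsRootOfDelta E t d := by
  refine ⟨D, hDE, hcard, ?_, hD.2⟩
  obtain ⟨x, y, hx, hy, hxy⟩ :=
    (Set.one_lt_ncard_iff (Set.finite_of_ncard_pos (s := D) (by omega))).mp (by omega)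
  have hsInter : ⋂₀ D ⊆ d :=
    (Set.subset_inter (Set.sInter_subset_of_mem hx) (Set.sInter_subset_of_mem hy)).trans
      (hD.2 hx hy hxy).le
  exact hsInter.antisymm (Set.subset_sInter hD.1)

end DeltaSystem

def hyperLang.rel {k n : ℕ} (h : n = k) : (hyperLang k).Relations n := ⟨h⟩

/-- With free variables `x₁, …, x_m, y₁, …, y_n`: there are `z₁, …, z_p` such that
`R(x₁, …, x_m, z₁, …, z_p)` and no `zⱼ` equals any `yᵢ`. -/
noncomputable def edgeAvoidingFormula (k m n p : ℕ) (h : m + p = k) :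
    (hyperLang k).Formula (Fin (m + n)) :=
  (Relations.boundedFormula (hyperLang.rel h)
      (Fin.append (fun i => Term.var (Sum.inl (Fin.castAdd n i)))
        (fun j => Term.var (Sum.inr j))) ⊓
    BoundedFormula.iInf fun q : Fin p × Fin n =>
      ∼((Term.var (Sum.inr q.1)).bdEqual (Term.var (Sum.inl (Fin.natAdd m q.2))))).exs

theorem realize_edgeAvoidingFormula {k m n p : ℕ} (h : m + p = k) {W : Type*}
    [(hyperLang k).Structure W] (a : Fin m → W) (c : Fin n → W) :
    (edgeAvoidingFormula k m n p h).Realize (Fin.append a c) ↔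
      ∃ z : Fin p → W, RelMap (hyperLang.rel h) (Fin.append a z) ∧ ∀ j i, z j ≠ c i := by
  simp only [edgeAvoidingFormula, BoundedFormula.realize_exs, BoundedFormula.realize_inf,
    BoundedFormula.realize_rel, BoundedFormula.realize_iInf, BoundedFormula.realize_not,
    BoundedFormula.realize_bdEqual, Term.realize, Sum.elim_inl, Sum.elim_inr, Fin.append_right,
    Prod.forall]
  refine exists_congr fun z => and_congr ?_ Iff.rfl
  congr! 1
  ext i
  refine Fin.addCases (fun i => ?_) (fun j => ?_) i <;> simp

namespace IsElementarySet

variable {V : Type u} {k : ℕ} {E : Set (Set V)} {M : Set V}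

theorem exists_edge_inter_subset (hM : IsElementarySet k E M) {e : Set V} (he : e ∈ E)
    (hefin : e.Finite) (hek : e.ncard = k) {F : Set V} (hF : F.Finite) :
    ∃ e' ∈ E, e' ⊆ M ∧ e ∩ M ⊆ e' ∧ e' ∩ F ⊆ e ∩ M := by
  let := hyperStructure k E
  let := hyperSubStructure k E M
  obtain ⟨m, a, ha, hrange_a⟩ :=
    (hefin.preimage Subtype.val_injective.injOn : (Subtype.val ⁻¹' e : Set M).Finite).fin_param
  replace hrange_a : Set.range (Subtype.val ∘ a) = e ∩ M := by
    rw [Set.range_comp, hrange_a, Subtype.image_preimage_coe, Set.inter_comm]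
  obtain ⟨p, w, hw, hrange_w⟩ := (hefin.sdiff (t := M)).fin_param
  have hw_notMem : ∀ j, w j ∉ M := fun j =>
    (hrange_w ▸ Set.mem_range_self j : w j ∈ e \ M).2
  obtain ⟨n, c, -, hrange_c⟩ :=
    (hF.preimage Subtype.val_injective.injOn : (Subtype.val ⁻¹' F : Set M).Finite).fin_param
  have hinj : Function.Injective (Fin.append (Subtype.val ∘ a) w) :=
    Fin.append_injective_iff.mpr ⟨Subtype.val_injective.comp ha, hw,
      fun i j hij => hw_notMem j (hij ▸ (a i).2)⟩
  have hrange : Set.range (Fin.append (Subtype.val ∘ a) w) = e := by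
    rw [Fin.range_append, hrange_a, hrange_w, Set.inter_union_sdiff]
  have hmp : m + p = k := by
    rw [← hek, ← hrange, Set.ncard_range_of_injective hinj, Nat.card_eq_fintype_card,
      Fintype.card_fin]
  have hV : (edgeAvoidingFormula k m n p hmp).Realize
      (Fin.append (Subtype.val ∘ a) (Subtype.val ∘ c)) :=
    (realize_edgeAvoidingFormula hmp _ _).mpr
      ⟨w, ⟨hinj, hrange ▸ he⟩, fun j i hji => hw_notMem j (hji ▸ (c i).2)⟩
  rw [← Fin.comp_append] at hV
  obtain ⟨z, ⟨-, hzE⟩, hzc⟩ := (realize_edgeAvoidingFormula hmp a c).mp ((hM _ _ _).mpr hV)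
  replace hzE : Set.range (Subtype.val ∘ Fin.append a z) ∈ E := hzE
  rw [Fin.comp_append, Fin.range_append, hrange_a] at hzE
  refine ⟨_, hzE, Set.union_subset Set.inter_subset_right ?_, Set.subset_union_left, ?_⟩
  · exact Set.range_subset_iff.mpr fun j => (z j).2
  · rintro x ⟨hx | ⟨j, rfl⟩, hxF⟩
    · exact hx
    · obtain ⟨i, hi⟩ : z j ∈ Set.range c := hrange_c ▸ hxF
      exact absurd hi.symm (hzc j i)

theorem exists_isDeltaSystem (hM : IsElementarySet k E M) (hUnif : ∀ x ∈ E, x.ncard = k)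
    (hk : 0 < k) {e : Set V} (he : e ∈ E) (hroot : (e ∩ M).ncard < k) (n : ℕ) :
    ∃ D ⊆ E, D.ncard = n + 1 ∧ IsDeltaSystem D (e ∩ M) := by
  have hfin : ∀ x ∈ E, x.Finite := fun x hx => Set.finite_of_ncard_pos (hUnif x hx ▸ hk)
  induction n with
  | zero =>
    exact ⟨{e}, Set.singleton_subset_iff.mpr he, Set.ncard_singleton e,
      isDeltaSystem_singleton Set.inter_subset_left⟩
  | succ n ih =>
    obtain ⟨D, hDE, hDcard, hD⟩ := ih
    have hUfin : (⋃₀ D).Finite :=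
      (Set.finite_of_ncard_pos (by omega)).sUnion fun x hx => hfin x (hDE hx)
    obtain ⟨e', he'E, -, hcore, hmeet⟩ :=
      hM.exists_edge_inter_subset he (hfin e he) (hUnif e he) hUfin
    have he'D : e' ∉ D := fun he'D => by
      have hsub : e' ⊆ e ∩ M := fun x hx => hmeet ⟨hx, Set.subset_sUnion_of_mem he'D hx⟩
      have hle := Set.ncard_le_ncard hsub ((hfin e he).inter_of_left M)
      rw [hUnif e' he'E] at hle
      omega
    refine ⟨insert e' D, Set.insert_subset he'E hDE, ?_, ?_⟩
    · rw [Set.ncard_insert_of_notMem he'D (Set.finite_of_ncard_pos (by omega)), hDcard]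
    · exact hD.insert hcore fun x hx =>
        (Set.inter_subset_inter_right e' (Set.subset_sUnion_of_mem hx)).trans hmeet

end IsElementarySet

theorem no_edge_meeting_elementary_in_nonroot_general {V : Type u} (k t : ℕ)
    (hk : 2 ≤ k) (ht : 2 ≤ t)
    (E : Set (Set V)) (hUnif : ∀ e ∈ E, e.ncard = k)
    (M : Set V) (hM : IsElementarySet k E M)
    (f : Set V) (hfcard : f.ncard ≤ k - 1)
    (hnotroot : ¬ IsRootOfDelta E t f) :
    ¬ ∃ e ∈ E, e ∩ M = f := by
  rintro ⟨e, he, rfl⟩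
  obtain ⟨D, hDE, hDcard, hD⟩ := hM.exists_isDeltaSystem hUnif (by omega) he (by omega) (t - 1)
  exact hnotroot (hD.isRootOfDelta hDE (by omega) ht)

/-- **Claim 2.2** (abstract version). If `M` is an elementary substructure of the
structure associated with a `k`-uniform hypergraph `(V, E)` and `f ⊆ M` is a set of
at most `k - 1` vertices which is not the root of a delta system of size `t` in `H`,
then no edge `e ∈ E` satisfies `e ∩ M = f`. -/
theorem no_edge_meeting_elementary_in_nonroot {V : Type u} (k t : ℕ)
    (hk : 2 ≤ k) (ht : 2 ≤ t)
    (E : Set (Set V)) (hUnif : ∀ e ∈ E, e.ncard = k)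
    (M : Set V) (hM : IsElementarySet k E M)
    (f : Set V) (hfM : f ⊆ M) (hfin : f.Finite) (hfcard : f.ncard ≤ k - 1)
    (hnotroot : ¬ IsRootOfDelta E t f) :
    ¬ ∃ e ∈ E, e ∩ M = f :=
  no_edge_meeting_elementary_in_nonroot_general k t hk ht E hUnif M hM f hfcard hnotroot
end

section
/- Let n ≥ 1 be an integer and let X, Y be finite sets with |X| ≥ 2n³ + n and |Y| ≥ 2n³ + n. Let β : X × Y → S be a function into some set S such that for every x ∈ X the map y ↦ β(x, y) is injective, and for every y ∈ Y the map x ↦ β(x, y) is injective. Then there exist subsets X* ⊆ X and Y* ⊆ Y with |X*| = |Y*| = n such that β is injective on X* × Y*, i.e., the n² values β(x, y) with x ∈ X*, y ∈ Y* are pairwise distinct. -/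
/-- If `X` and `Y` are finite sets of size at least `2n³ + n` and `β : X × Y → S` is
injective in each coordinate separately (each row map and each column map is
injective), then there are `n`-element subsets `X* ⊆ X` and `Y* ⊆ Y` on whose
product `β` is injective, i.e. the `n²` values `β (x, y)` with `x ∈ X*`, `y ∈ Y*`
are pairwise distinct. -/
theorem exists_injective_subgrid {U W S : Type*} (n : ℕ) (hn : 1 ≤ n)
    (X : Finset U) (Y : Finset W)
    (hX : 2 * n ^ 3 + n ≤ X.card) (hY : 2 * n ^ 3 + n ≤ Y.card)
    (β : U → W → S)
    (hrow : ∀ x ∈ X, Set.InjOn (fun y => β x y) (Y : Set W))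
    (hcol : ∀ y ∈ Y, Set.InjOn (fun x => β x y) (X : Set U)) :
    ∃ X' ⊆ X, ∃ Y' ⊆ Y, X'.card = n ∧ Y'.card = n ∧
      ∀ x ∈ X', ∀ y ∈ Y', ∀ x' ∈ X', ∀ y' ∈ Y',
        β x y = β x' y' → x = x' ∧ y = y' := by
  classical
  have key : ∀ k, k ≤ n → ∃ X' ⊆ X, ∃ Y' ⊆ Y, X'.card = k ∧ Y'.card = k ∧
      ∀ x ∈ X', ∀ y ∈ Y', ∀ x' ∈ X', ∀ y' ∈ Y',
        β x y = β x' y' → x = x' ∧ y = y' := by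
    intro k
    induction k with
    | zero => exact fun _ => ⟨∅, Finset.empty_subset _, ∅, Finset.empty_subset _, rfl, rfl,
        by simp⟩
    | succ k ih =>
      intro hk
      have hkn : k < n := hk
      obtain ⟨X', hX'X, Y', hY'Y, hXc, hYc, hgood⟩ := ih hkn.le
      -- choose a new x
      set BadX : Finset U := X.filter
        (fun x => x ∈ X' ∨ ∃ y ∈ Y', ∃ x' ∈ X', ∃ y'' ∈ Y', β x y = β x' y'') with hBadX
      have hBadsub : BadX ⊆ X' ∪ (Y' ×ˢ X' ×ˢ Y').biUnion
          (fun t => X.filter fun x => β x t.1 = β t.2.1 t.2.2) := by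
        intro x hx
        rw [hBadX, Finset.mem_filter] at hx
        obtain ⟨hxX, h | ⟨y, hy, x', hx', y'', hy'', he⟩⟩ := hx
        · exact Finset.mem_union_left _ h
        · refine Finset.mem_union_right _ (Finset.mem_biUnion.mpr ⟨(y, x', y''), ?_, ?_⟩)
          · simp [Finset.mem_product, hy, hx', hy'']
          · exact Finset.mem_filter.mpr ⟨hxX, he⟩
      have hcard1 : ∀ t ∈ Y' ×ˢ X' ×ˢ Y',
          (X.filter fun x => β x t.1 = β t.2.1 t.2.2).card ≤ 1 := by
        intro t ht
        rw [Finset.mem_product] at ht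
        apply Finset.card_le_one.mpr
        intro a ha b hb
        rw [Finset.mem_filter] at ha hb
        exact hcol t.1 (hY'Y ht.1) (ha.1) (hb.1) (ha.2.trans hb.2.symm)
      have hBadcard : BadX.card ≤ k + k * (k * k) := by
        calc BadX.card ≤ (X' ∪ _).card := Finset.card_le_card hBadsub
          _ ≤ X'.card + ((Y' ×ˢ X' ×ˢ Y').biUnion
              (fun t => X.filter fun x => β x t.1 = β t.2.1 t.2.2)).card :=
            Finset.card_union_le _ _
          _ ≤ k + ∑ t ∈ Y' ×ˢ X' ×ˢ Y',
              (X.filter fun x => β x t.1 = β t.2.1 t.2.2).card := by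
            rw [hXc]; exact Nat.add_le_add_left (Finset.card_biUnion_le) _
          _ ≤ k + (Y' ×ˢ X' ×ˢ Y').card * 1 := by
            exact Nat.add_le_add_left (Finset.sum_le_card_nsmul _ _ 1 hcard1) _
          _ = k + k * (k * k) := by
            simp [Finset.card_product, hXc, hYc, mul_comm, mul_assoc, mul_left_comm]
      have hlt : BadX.card < X.card := by
        apply lt_of_le_of_lt hBadcard
        apply lt_of_lt_of_le _ hX
        have h3 : k ^ 3 < n ^ 3 := Nat.pow_lt_pow_left hkn three_ne_zero
        nlinarith [h3, hkn, hn]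
      have hpos : 0 < (X \ BadX).card := by
        have := Finset.card_sdiff_of_subset (show BadX ⊆ X from hBadX ▸ Finset.filter_subset _ _)
        omega
      obtain ⟨x, hxmem⟩ := Finset.card_pos.mp hpos
      obtain ⟨hxX, hxBad⟩ := Finset.mem_sdiff.mp hxmem
      rw [hBadX, Finset.mem_filter] at hxBad
      push_neg at hxBad
      obtain ⟨hxX', hxgood⟩ := hxBad hxX
      -- choose a new y
      set X₁ : Finset U := insert x X' with hX₁
      have hX₁X : X₁ ⊆ X := Finset.insert_subset hxX hX'X
      have hX₁c : X₁.card = k + 1 := by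
        rw [hX₁, Finset.card_insert_of_notMem hxX', hXc]
      set BadY : Finset W := Y.filter
        (fun y => y ∈ Y' ∨ ∃ x' ∈ X₁, ∃ x'' ∈ X₁, ∃ y'' ∈ Y', β x' y = β x'' y'') with hBadY
      have hBadsubY : BadY ⊆ Y' ∪ (X₁ ×ˢ X₁ ×ˢ Y').biUnion
          (fun t => Y.filter fun y => β t.1 y = β t.2.1 t.2.2) := by
        intro y hy
        rw [hBadY, Finset.mem_filter] at hy
        obtain ⟨hyY, h | ⟨x', hx', x'', hx'', y'', hy'', he⟩⟩ := hy
        · exact Finset.mem_union_left _ h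
        · refine Finset.mem_union_right _ (Finset.mem_biUnion.mpr ⟨(x', x'', y''), ?_, ?_⟩)
          · simp [Finset.mem_product, hx', hx'', hy'']
          · exact Finset.mem_filter.mpr ⟨hyY, he⟩
      have hcard1Y : ∀ t ∈ X₁ ×ˢ X₁ ×ˢ Y',
          (Y.filter fun y => β t.1 y = β t.2.1 t.2.2).card ≤ 1 := by
        intro t ht
        rw [Finset.mem_product] at ht
        apply Finset.card_le_one.mpr
        intro a ha b hb
        rw [Finset.mem_filter] at ha hb
        exact hrow t.1 (hX₁X ht.1) (ha.1) (hb.1) (ha.2.trans hb.2.symm)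
      have hBadcardY : BadY.card ≤ k + (k+1) * ((k+1) * k) := by
        calc BadY.card ≤ (Y' ∪ _).card := Finset.card_le_card hBadsubY
          _ ≤ Y'.card + ((X₁ ×ˢ X₁ ×ˢ Y').biUnion
              (fun t => Y.filter fun y => β t.1 y = β t.2.1 t.2.2)).card :=
            Finset.card_union_le _ _
          _ ≤ k + ∑ t ∈ X₁ ×ˢ X₁ ×ˢ Y',
              (Y.filter fun y => β t.1 y = β t.2.1 t.2.2).card := by
            rw [hYc]; exact Nat.add_le_add_left (Finset.card_biUnion_le) _
          _ ≤ k + (X₁ ×ˢ X₁ ×ˢ Y').card * 1 := by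
            exact Nat.add_le_add_left (Finset.sum_le_card_nsmul _ _ 1 hcard1Y) _
          _ = k + (k+1) * ((k+1) * k) := by
            simp [Finset.card_product, hX₁c, hYc]
      have hltY : BadY.card < Y.card := by
        apply lt_of_le_of_lt hBadcardY
        apply lt_of_lt_of_le _ hY
        have h2 : (k+1) ^ 2 ≤ n ^ 2 := Nat.pow_le_pow_left hk 2
        nlinarith [h2, hkn, hn]
      have hposY : 0 < (Y \ BadY).card := by
        have := Finset.card_sdiff_of_subset (show BadY ⊆ Y from hBadY ▸ Finset.filter_subset _ _)
        omega
      obtain ⟨y, hymem⟩ := Finset.card_pos.mp hposY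
      obtain ⟨hyY, hyBad⟩ := Finset.mem_sdiff.mp hymem
      rw [hBadY, Finset.mem_filter] at hyBad
      push_neg at hyBad
      obtain ⟨hyY', hygood⟩ := hyBad hyY
      -- assemble
      refine ⟨X₁, hX₁X, insert y Y', Finset.insert_subset hyY hY'Y, hX₁c,
        by rw [Finset.card_insert_of_notMem hyY', hYc], ?_⟩
      intro a ha b hb a' ha' b' hb' he
      have haX₁ : a ∈ X₁ := ha
      have ha'X₁ : a' ∈ X₁ := ha'
      have haX : a ∈ X := hX₁X haX₁
      have ha'X : a' ∈ X := hX₁X ha'X₁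
      rw [hX₁, Finset.mem_insert] at ha ha'
      rw [Finset.mem_insert] at hb hb'
      have hbY : b ∈ Y := by rcases hb with h | h; exacts [h ▸ hyY, hY'Y h]
      have hb'Y : b' ∈ Y := by rcases hb' with h | h; exacts [h ▸ hyY, hY'Y h]
      rcases hb with hby | hbold
      · rcases hb' with hb'y | hb'old
        · rw [hby, hb'y] at he
          exact ⟨hcol y hyY haX ha'X he, hby.trans hb'y.symm⟩
        · rw [hby] at he
          exact absurd he (hygood a haX₁ a' ha'X₁ b' hb'old)
      · rcases hb' with hb'y | hb'old
        · rw [hb'y] at he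
          exact absurd he.symm (hygood a' ha'X₁ a haX₁ b hbold)
        · rcases ha with hax | haold
          · rcases ha' with ha'x | ha'old
            · rw [hax, ha'x] at he
              exact ⟨hax.trans ha'x.symm, hrow x hxX hbY hb'Y he⟩
            · rw [hax] at he
              exact absurd he (hxgood b hbold a' ha'old b' hb'old)
          · rcases ha' with ha'x | ha'old
            · rw [ha'x] at he
              exact absurd he.symm (hxgood b' hb'old a haold b hbold)
            · exact hgood a haold b hbold a' ha'old b' hb'old he
  obtain ⟨X', h1, Y', h2, h3, h4, h5⟩ := key n le_rfl
  exact ⟨X', h1, Y', h2, h3, h4, h5⟩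
end

section
/- Let n ≥ 1 and t ≥ 1 be integers, set q = tn³ + n, and let X, Y be disjoint sets with |X| = |Y| = q. Let β : X × Y → S be a function into some set S, and suppose that X* ⊆ X and Y* ⊆ Y form a maximal good pair with |X*| < n, where a pair (X*, Y*) is good if |X*| ≤ n, |Y*| ≤ n, and the |X*|·|Y*| values β(x, y) with x ∈ X*, y ∈ Y* are pairwise distinct, and maximal means |X*| + |Y*| is maximal among good pairs. Write B = {β(x, y) : x ∈ X*, y ∈ Y*}. If additionally for every x ∈ X ∖ X* there exist υ(x) ∈ Y* and β(x) ∈ B with β(x, υ(x)) = β(x), then there exist υ ∈ Y*, b ∈ B, and a set T ⊆ X ∖ X* with |T| = t such that β(x, υ) = b for every x ∈ T. -/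
/-- The pair `(X', Y')` is *good* (with respect to `β` and the parameter `n`) if both
sets have at most `n` elements and the values `β x y` with `x ∈ X'`, `y ∈ Y'` are
pairwise distinct. -/
def GoodPair {U S : Type*} (n : ℕ) (β : U → U → S) (X' Y' : Finset U) : Prop :=
  X'.card ≤ n ∧ Y'.card ≤ n ∧
    ∀ x ∈ X', ∀ y ∈ Y', ∀ x' ∈ X', ∀ y' ∈ Y', β x y = β x' y' → x = x' ∧ y = y'

/-- Let `q = t n³ + n` and let `X, Y` be disjoint sets of size `q`.  Suppose
`(X*, Y*)` is a good pair, maximal in the sense that `|X*| + |Y*|` is maximal among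
good pairs, with `|X*| < n`, and suppose that for every `x ∈ X \ X*` there are
`υ(x) ∈ Y*` and `b(x) ∈ B = β(X* × Y*)` with `β x (υ x) = b x`.  Then there are a
single `υ ∈ Y*`, `b ∈ B` and a `t`-element set `T ⊆ X \ X*` with `β x υ = b` for
every `x ∈ T`. -/
theorem exists_large_fiber {U S : Type*} [DecidableEq U] (n t : ℕ)
    (hn : 1 ≤ n) (ht : 1 ≤ t)
    (X Y : Finset U) (hXY : Disjoint X Y)
    (hX : X.card = t * n ^ 3 + n) (hY : Y.card = t * n ^ 3 + n)
    (β : U → U → S)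
    (Xs Ys : Finset U) (hXs : Xs ⊆ X) (hYs : Ys ⊆ Y)
    (hgood : GoodPair n β Xs Ys)
    (hmax : ∀ X' ⊆ X, ∀ Y' ⊆ Y, GoodPair n β X' Y' →
      X'.card + Y'.card ≤ Xs.card + Ys.card)
    (hXslt : Xs.card < n)
    (hext : ∀ x ∈ X \ Xs, ∃ υ ∈ Ys, ∃ xs ∈ Xs, ∃ ys ∈ Ys, β x υ = β xs ys) :
    ∃ υ ∈ Ys, ∃ xs ∈ Xs, ∃ ys ∈ Ys, ∃ T ⊆ X \ Xs, T.card = t ∧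
      ∀ x ∈ T, β x υ = β xs ys := by

  classical
  obtain ⟨hXsn, hYsn, hinj⟩ := hgood
  -- choice function sending each x ∈ X \ Xs to a witnessing triple
  have hfun : ∀ x, ∃ p : U × U × U, x ∈ X \ Xs →
      p ∈ Ys ×ˢ Xs ×ˢ Ys ∧ β x p.1 = β p.2.1 p.2.2 := by
    intro x
    by_cases hx : x ∈ X \ Xs
    · obtain ⟨υ, hυ, xs, hxs, ys, hys, hb⟩ := hext x hx
      exact ⟨(υ, xs, ys), fun _ => ⟨by simp [Finset.mem_product, hυ, hxs, hys], hb⟩⟩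
    · exact ⟨(x, x, x), fun h => absurd h hx⟩
  choose f hf using hfun
  have hmaps : ∀ x ∈ X \ Xs, f x ∈ Ys ×ˢ Xs ×ˢ Ys := fun x hx => (hf x hx).1
  have hcardT : (Ys ×ˢ Xs ×ˢ Ys).card * t ≤ (X \ Xs).card := by
    have h1 : (Ys ×ˢ Xs ×ˢ Ys).card ≤ n ^ 3 := by
      rw [Finset.card_product, Finset.card_product]
      calc Ys.card * (Xs.card * Ys.card) ≤ n * (n * n) := by
            apply Nat.mul_le_mul hYsn (Nat.mul_le_mul (le_of_lt hXslt) hYsn)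
        _ = n ^ 3 := by ring
    have h2 : (X \ Xs).card = X.card - Xs.card := Finset.card_sdiff_of_subset hXs
    have : t * n ^ 3 + 1 ≤ (X \ Xs).card := by
      rw [h2, hX]
      omega
    calc (Ys ×ˢ Xs ×ˢ Ys).card * t ≤ n ^ 3 * t := Nat.mul_le_mul_right t h1
      _ = t * n ^ 3 := Nat.mul_comm _ _
      _ ≤ (X \ Xs).card := le_trans (Nat.le_succ _) this
  have hne : (Ys ×ˢ Xs ×ˢ Ys).Nonempty := by
    have hpos : 0 < (X \ Xs).card := by
      have h2 : (X \ Xs).card = X.card - Xs.card := Finset.card_sdiff_of_subset hXs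
      rw [h2, hX]; omega
    obtain ⟨x, hx⟩ := Finset.card_pos.mp hpos
    exact ⟨f x, hmaps x hx⟩
  obtain ⟨p, hp, hfib⟩ := Finset.exists_le_card_fiber_of_mul_le_card_of_maps_to hmaps hne hcardT
  obtain ⟨T, hTsub, hTcard⟩ := Finset.exists_subset_card_eq hfib
  obtain ⟨υ, xs, ys⟩ := p
  simp only [Finset.mem_product] at hp
  refine ⟨υ, hp.1, xs, hp.2.1, ys, hp.2.2, T,
    (hTsub.trans (Finset.filter_subset _ _)), hTcard, ?_⟩
  intro x hxT
  have hx := hTsub hxT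
  rw [Finset.mem_filter] at hx
  have := (hf x hx.1).2
  rw [hx.2] at this
  exact this
end

section
/- For every integer k ≥ 2, the class of obligatory finite k-uniform hypergraphs is closed under disjoint unions: if F₁ and F₂ are obligatory finite k-uniform hypergraphs, then the hypergraph obtained as the disjoint union of F₁ and F₂ (vertex set the disjoint union of the vertex sets, edge set the union of the two edge sets) is obligatory. -/
open Cardinal

universe u

/-- A finite `k`-uniform hypergraph `(VF, EF)` is *obligatory* if every `k`-uniform
hypergraph of chromatic number at least `ℵ₁` contains a copy of it. -/
def Obligatory (k : ℕ) {VF : Type} (EF : Set (Set VF)) : Prop :=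
  ∀ (V : Type u) (E : Set (Set V)), (∀ e ∈ E, e.ncard = k) →
    Cardinal.aleph 1 ≤ chromaticNumber V E →
    ∃ φ : VF → V, Function.Injective φ ∧ ∀ e ∈ EF, φ '' e ∈ E

/-- The class of obligatory finite `k`-uniform hypergraphs is closed under disjoint
unions: if `(V₁, E₁)` and `(V₂, E₂)` are obligatory, then so is their disjoint union,
with vertex set `V₁ ⊕ V₂` and edge set the union of (the images of) `E₁` and `E₂`. -/
theorem obligatory_disjUnion (k : ℕ) (hk : 2 ≤ k)
    {V₁ V₂ : Type} [Finite V₁] [Finite V₂]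
    (E₁ : Set (Set V₁)) (E₂ : Set (Set V₂))
    (h₁ : ∀ e ∈ E₁, e.ncard = k) (h₂ : ∀ e ∈ E₂, e.ncard = k)
    (hObl₁ : Obligatory.{u} k E₁) (hObl₂ : Obligatory.{u} k E₂) :
    Obligatory.{u} k
      ((fun e => Sum.inl '' e) '' E₁ ∪ (fun e => Sum.inr '' e) '' E₂ :
        Set (Set (V₁ ⊕ V₂))) := by
  classical
  intro V E hUnif hχ
  obtain ⟨φ₁, hφ₁inj, hφ₁E⟩ := hObl₁ V E hUnif hχ
  set S : Set V := Set.range φ₁ with hSdef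
  have hSfin : S.Finite := Set.finite_range _
  -- edges have at least two vertices
  have htwo : ∀ e ∈ E, 1 < e.ncard := by
    intro e he
    rw [hUnif e he]; omega
  have hfin : ∀ e ∈ E, e.Finite := by
    intro e he
    apply Set.finite_of_ncard_ne_zero
    rw [hUnif e he]; omega
  -- the restricted hypergraph on the complement of S
  let V' : Type u := ↥(Sᶜ)
  let E' : Set (Set V') := {e' | Subtype.val '' e' ∈ E}
  have hUnif' : ∀ e ∈ E', e.ncard = k := by
    intro e he
    have h := hUnif _ he
    rwa [Set.ncard_image_of_injective _ Subtype.val_injective] at h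
  have hχ' : Cardinal.aleph 1 ≤ chromaticNumber V' E' := by
    by_contra hlt
    push_neg at hlt
    have hne : { κ : Cardinal.{u} |
        ∃ (α : Type u) (f : V' → α), #α = κ ∧ IsProperColoring E' f }.Nonempty := by
      refine ⟨#V', V', id, rfl, ?_⟩
      intro e he
      have h1 : 1 < e.ncard := by rw [hUnif' e he]; omega
      have hef : e.Finite := Set.finite_of_ncard_ne_zero (by omega)
      obtain ⟨x, y, hx, hy, hxy⟩ := (Set.one_lt_ncard_iff hef).mp h1
      exact ⟨x, hx, y, hy, fun h => hxy (by simpa using h)⟩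
    obtain ⟨α, f, hα, hf⟩ := csInf_mem hne
    let g : V → α ⊕ ↥S := fun v =>
      if h : v ∈ S then Sum.inr ⟨v, h⟩ else Sum.inl (f ⟨v, h⟩)
    have hg : IsProperColoring E g := by
      intro e he
      by_cases hcase : ∃ x ∈ e, x ∈ S
      · obtain ⟨x, hxe, hxS⟩ := hcase
        obtain ⟨y, hye, hyx⟩ := Set.exists_ne_of_one_lt_ncard (htwo e he) x
        refine ⟨x, hxe, y, hye, ?_⟩
        simp only [g, dif_pos hxS]
        by_cases hyS : y ∈ S
        · rw [dif_pos hyS]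
          intro hc
          exact hyx (by simpa [eq_comm] using (Sum.inr.inj hc))
        · rw [dif_neg hyS]; simp
      · push_neg at hcase
        have hsub : e ⊆ Sᶜ := fun x hx => hcase x hx
        have heq : Subtype.val '' (Subtype.val ⁻¹' e : Set V') = e := by
          rw [Subtype.image_preimage_coe]
          exact Set.inter_eq_right.mpr hsub
        have he' : (Subtype.val ⁻¹' e : Set V') ∈ E' := by
          show Subtype.val '' _ ∈ E
          rw [heq]; exact he
        obtain ⟨x, hx, y, hy, hxy⟩ := hf _ he'
        refine ⟨↑x, hx, ↑y, hy, ?_⟩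
        have hxS : (↑x : V) ∉ S := x.2
        have hyS : (↑y : V) ∉ S := y.2
        simp only [g, dif_neg hxS, dif_neg hyS]
        intro hc
        exact hxy (Sum.inl.inj hc)
    have hle : chromaticNumber V E ≤ #(α ⊕ ↥S) :=
      csInf_le (OrderBot.bddBelow _) ⟨α ⊕ ↥S, g, rfl, hg⟩
    have hSfin' : Finite ↥S := hSfin
    have hsum : #(α ⊕ ↥S) < Cardinal.aleph 1 := by
      rw [Cardinal.mk_sum, Cardinal.lift_id, Cardinal.lift_id]
      exact Cardinal.add_lt_of_lt (Cardinal.aleph0_le_aleph 1) (hα ▸ hlt)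
        ((Cardinal.lt_aleph0_of_finite _).trans_le (Cardinal.aleph0_le_aleph 1))
    exact absurd (hχ.trans hle) hsum.not_ge
  obtain ⟨φ₂, hφ₂inj, hφ₂E⟩ := hObl₂ V' E' hUnif' hχ'
  refine ⟨Sum.elim φ₁ (fun b => ↑(φ₂ b)), ?_, ?_⟩
  · intro a b hab
    match a, b with
    | Sum.inl a, Sum.inl b => exact congrArg _ (hφ₁inj hab)
    | Sum.inr a, Sum.inr b =>
        exact congrArg _ (hφ₂inj (Subtype.val_injective hab))
    | Sum.inl a, Sum.inr b => exact absurd ⟨a, hab⟩ (φ₂ b).2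
    | Sum.inr a, Sum.inl b => exact absurd ⟨b, hab.symm⟩ (φ₂ a).2
  · intro e he
    rcases he with ⟨e₁, he₁, rfl⟩ | ⟨e₂, he₂, rfl⟩
    · rw [Set.image_image]
      simpa using hφ₁E e₁ he₁
    · rw [Set.image_image]
      have h := hφ₂E e₂ he₂
      have h' : Subtype.val '' (φ₂ '' e₂) ∈ E := h
      rw [Set.image_image] at h'
      simpa using h'
end

section
/- For every integer k ≥ 2, the class of obligatory finite k-uniform hypergraphs is closed under one-point amalgamations: if F₁ and F₂ are obligatory finite k-uniform hypergraphs, v₁ ∈ V(F₁) and v₂ ∈ V(F₂), then the hypergraph obtained from the disjoint union of F₁ and F₂ by identifying v₁ with v₂ is obligatory. -/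
open Cardinal

universe u

/-!
Call a vertex `v` of `H` a free root if for every finite set `X` some copy of `F₂` sends `v₂` to
`v` and meets `X` at most in `v`. Every vertex `v` that is not a free root has a finite obstruction
`X v`; the arcs `v → u` with `u ∈ X v` have finite out-degree, so they form a countably colourable
graph, and each of its colour classes of non-free roots is countably chromatic: as `F₂` is
obligatory, a copy inside the class would be rooted at some `v` and meet `X v` away from `v`.
Hence if `χ(H) ≥ ℵ₁`, the free roots span an uncountably chromatic subhypergraph, which contains a
copy of `F₁`. The image of `v₁` is a free root, so a copy of `F₂` attached there can avoid the rest
of the copy of `F₁`.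
-/

theorem Set.countable_setOf_reflTransGen {β : Type*} {r : β → β → Prop}
    (hr : ∀ a, {b | r a b}.Finite) (a : β) : {b | Relation.ReflTransGen r a b}.Countable := by
  let step : Set β → Set β := fun s => s ∪ ⋃ x ∈ s, {y | r x y}
  have hfin : ∀ n, (step^[n] {a}).Finite := by
    intro n
    induction n with
    | zero => exact Set.finite_singleton a
    | succ n ih =>
      rw [Function.iterate_succ_apply']
      exact ih.union (ih.biUnion fun x _ => hr x)
  refine (Set.countable_iUnion fun n => (hfin n).countable).mono fun b hb => ?_
  induction hb with
  | refl => exact Set.mem_iUnion.2 ⟨0, rfl⟩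
  | tail _ hxy ih =>
    obtain ⟨n, hn⟩ := Set.mem_iUnion.1 ih
    refine Set.mem_iUnion.2 ⟨n + 1, ?_⟩
    rw [Function.iterate_succ_apply']
    exact Or.inr (Set.mem_biUnion hn hxy)

namespace SimpleGraph

variable {β : Type*}

theorem nonempty_coloring_nat_of_finite_lower_neighbors {γ : Type*} [LinearOrder γ]
    [WellFoundedLT γ] (G : SimpleGraph β) (key : β → γ) (hkey : Function.Injective key)
    (hfin : ∀ v, {u | G.Adj u v ∧ key u < key v}.Finite) : Nonempty (G.Coloring ℕ) := by
  have wf : WellFounded fun u v => key u < key v := InvImage.wf key wellFounded_lt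
  let c : β → ℕ := wf.fix fun v c' =>
    sInf {n | ∀ u (h : key u < key v), G.Adj u v → c' u h ≠ n}
  have hc : ∀ v, c v = sInf {n | ∀ u, key u < key v → G.Adj u v → c u ≠ n} :=
    fun v => wf.fix_eq _ v
  have hlower : ∀ u v, key u < key v → G.Adj u v → c u ≠ c v := by
    intro u v huv hadj
    have hfree : {n | ∀ u, key u < key v → G.Adj u v → c u ≠ n}.Nonempty := by
      obtain ⟨n, hn⟩ := ((hfin v).image c).infinite_compl.nonempty
      exact ⟨n, fun u hu hadj hcu => hn ⟨u, ⟨hadj, hu⟩, hcu⟩⟩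
    rw [hc v]
    exact Nat.sInf_mem hfree u huv hadj
  refine ⟨Coloring.mk c fun {u v} hadj => ?_⟩
  rcases lt_or_gt_of_ne (hkey.ne (G.ne_of_adj hadj)) with h | h
  · exact hlower u v h hadj
  · exact (hlower v u h hadj.symm).symm

theorem nonempty_coloring_nat_fromRel_of_finite (N : β → Set β) (hN : ∀ v, (N v).Finite) :
    Nonempty ((fromRel fun u v => u ∈ N v).Coloring ℕ) := by
  let reach : β → Set β := fun a => {b | Relation.ReflTransGen (fun x y => y ∈ N x) a b}
  choose pos hpos using fun a =>
    Set.countable_iff_exists_injOn.1 (Set.countable_setOf_reflTransGen hN a)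
  let rank : β → Cardinal := embeddingToCardinal
  -- arcs never lead to a later anchor and each anchor class lies in a countable `reach`, so
  -- ordering by (anchor, position in its class) leaves finitely many lower neighbours
  let anchor : β → β := fun v => Function.argminOn rank {a | v ∈ reach a} ⟨v, .refl⟩
  have mem_reach_anchor : ∀ v, v ∈ reach (anchor v) :=
    fun v => Function.argminOn_mem rank {a | v ∈ reach a} _
  have rank_anchor_le : ∀ {v a}, v ∈ reach a → rank (anchor v) ≤ rank a :=
    fun {v} _ h => Function.argminOn_le rank {a | v ∈ reach a} h
  let key : β → Cardinal ×ₗ ℕ := fun v => toLex (rank (anchor v), pos (anchor v) v)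
  have anchor_eq : ∀ {u v}, rank (anchor u) = rank (anchor v) → anchor u = anchor v :=
    fun h => embeddingToCardinal.injective h
  refine nonempty_coloring_nat_of_finite_lower_neighbors _ key ?_ fun v => ?_
  · intro u v h
    obtain ⟨h₁, h₂⟩ : rank (anchor u) = rank (anchor v) ∧ pos (anchor u) u = pos (anchor v) v :=
      Prod.ext_iff.1 (congrArg ofLex h)
    have ha := anchor_eq h₁
    rw [ha] at h₂
    exact hpos (anchor v) (ha ▸ mem_reach_anchor u) (mem_reach_anchor v) h₂
  · have hsame : {u | anchor u = anchor v ∧ pos (anchor v) u < pos (anchor v) v}.Finite := by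
      refine Set.Finite.of_finite_image (f := pos (anchor v))
        ((Set.finite_Iio (pos (anchor v) v)).subset ?_) ?_
      · rintro _ ⟨u, ⟨-, hu⟩, rfl⟩
        exact hu
      · exact (hpos (anchor v)).mono fun u hu => hu.1 ▸ mem_reach_anchor u
    refine ((hN v).union hsame).subset ?_
    rintro u ⟨⟨-, huv | hvu⟩, hlt⟩
    · exact Or.inl huv
    · right
      have hle := rank_anchor_le ((mem_reach_anchor u).tail hvu)
      rcases Prod.Lex.toLex_lt_toLex.1 hlt with h | ⟨h, h'⟩
      · exact absurd h hle.not_gt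
      · exact ⟨anchor_eq h, anchor_eq h ▸ h'⟩

end SimpleGraph

def IsCopy {VF V : Type*} (EF : Set (Set VF)) (E : Set (Set V)) (φ : VF → V) : Prop :=
  Function.Injective φ ∧ ∀ e ∈ EF, φ '' e ∈ E

theorem IsProperColoring.comp_injective {V α β : Type*} {E : Set (Set V)} {f : V → α}
    {g : α → β} (hf : IsProperColoring E f) (hg : Function.Injective g) :
    IsProperColoring E (g ∘ f) := fun e he => by
  obtain ⟨x, hx, y, hy, hxy⟩ := hf e he
  exact ⟨x, hx, y, hy, hg.ne hxy⟩

section Hypergraph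

variable {V : Type u} {E : Set (Set V)}

def CountablyColorableOn (E : Set (Set V)) (S : Set V) : Prop :=
  ∃ f : V → ℕ, ∀ e ∈ E, e ⊆ S → ∃ x ∈ e, ∃ y ∈ e, f x ≠ f y

theorem chromaticNumber_le_mk {α : Type u} {f : V → α} (hf : IsProperColoring E f) :
    chromaticNumber V E ≤ #α :=
  csInf_le' ⟨α, f, rfl, hf⟩

theorem chromaticNumber_lt_aleph_one {f : V → ℕ} (hf : IsProperColoring E f) :
    chromaticNumber V E < aleph 1 := by
  calc chromaticNumber V E ≤ #(ULift.{u} ℕ) :=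
      chromaticNumber_le_mk (hf.comp_injective ULift.up_injective)
    _ = ℵ₀ := by simp
    _ < aleph 1 := aleph0_lt_aleph_one

theorem exists_isProperColoring_nat (hE : ∀ e ∈ E, e.Nontrivial)
    (h : chromaticNumber V E < aleph 1) : ∃ f : V → ℕ, IsProperColoring E f := by
  have hid : IsProperColoring E (id : V → V) := hE
  obtain ⟨α, f, hα, hf⟩ := csInf_mem (s := { κ : Cardinal.{u} | ∃ (α : Type u) (f : V → α),
    #α = κ ∧ IsProperColoring E f }) ⟨#V, V, id, rfl, hid⟩
  have : Countable α := mk_le_aleph0_iff.1 (lt_aleph_one_iff.1 (hα ▸ h))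
  obtain ⟨g, hg⟩ := exists_injective_nat α
  exact ⟨g ∘ f, hf.comp_injective hg⟩

theorem countablyColorableOn_iUnion {ι : Type*} [Countable ι] [Nonempty ι] {S : ι → Set V}
    (h : ∀ i, CountablyColorableOn E (S i)) : CountablyColorableOn E (⋃ i, S i) := by
  choose f hf using h
  obtain ⟨g, hg⟩ := exists_injective_nat ι
  have hindex : ∀ v, ∃ i, v ∈ ⋃ j, S j → v ∈ S i := by
    intro v
    by_cases hv : v ∈ ⋃ j, S j
    · obtain ⟨i, hi⟩ := Set.mem_iUnion.1 hv
      exact ⟨i, fun _ => hi⟩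
    · exact ⟨Classical.arbitrary ι, fun h => absurd h hv⟩
  choose p hp using hindex
  refine ⟨fun v => Nat.pair (g (p v)) (f (p v) v), fun e he heS => ?_⟩
  by_cases hsame : ∃ i, ∀ x ∈ e, p x = i
  · obtain ⟨i, hi⟩ := hsame
    obtain ⟨x, hx, y, hy, hxy⟩ := hf i e he fun x hx => hi x hx ▸ hp x (heS hx)
    refine ⟨x, hx, y, hy, fun hpair => hxy ?_⟩
    dsimp only at hpair
    rw [hi x hx, hi y hy] at hpair
    exact (Nat.pair_eq_pair.1 hpair).2
  · push Not at hsame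
    obtain ⟨x, hx, -⟩ := hsame (Classical.arbitrary ι)
    obtain ⟨y, hy, hyx⟩ := hsame (p x)
    exact ⟨y, hy, x, hx, fun hpair => hyx (hg (Nat.pair_eq_pair.1 hpair).1)⟩

theorem countablyColorableOn_union {S T : Set V} (hS : CountablyColorableOn E S)
    (hT : CountablyColorableOn E T) : CountablyColorableOn E (S ∪ T) := by
  rw [Set.union_eq_iUnion]
  exact countablyColorableOn_iUnion (Bool.forall_bool.2 ⟨hT, hS⟩)

theorem Obligatory.exists_isCopy_subset {k : ℕ} {VF : Type} {EF : Set (Set VF)}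
    (hF : Obligatory.{u} k EF) (hk : 2 ≤ k) (hE : ∀ e ∈ E, e.ncard = k) {S : Set V}
    (hS : ¬ CountablyColorableOn E S) : ∃ φ : VF → V, IsCopy EF E φ ∧ Set.range φ ⊆ S := by
  classical
  let ES : Set (Set S) := {e | Subtype.val '' e ∈ E}
  have hES : ∀ e ∈ ES, e.ncard = k := fun e he =>
    Set.ncard_image_of_injective e Subtype.val_injective ▸ hE _ he
  have hχ : aleph 1 ≤ chromaticNumber S ES := by
    by_contra! hlt
    obtain ⟨f, hf⟩ := exists_isProperColoring_nat
      (fun e he => (Set.one_lt_ncard_iff_nontrivial_and_finite.1 (hES e he ▸ hk)).1) hlt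
    refine hS ⟨fun v => if h : v ∈ S then f ⟨v, h⟩ else 0, fun e he heS => ?_⟩
    have he' : Subtype.val ⁻¹' e ∈ ES := by
      show Subtype.val '' (Subtype.val ⁻¹' e) ∈ E
      rwa [Set.image_preimage_eq_of_subset (by rwa [Subtype.range_coe])]
    obtain ⟨x, hx, y, hy, hxy⟩ := hf _ he'
    exact ⟨x, hx, y, hy, by simpa only [x.2, y.2, dif_pos] using hxy⟩
  obtain ⟨φ, hφ, hφE⟩ := hF S ES hES hχ
  refine ⟨Subtype.val ∘ φ, ⟨Subtype.val_injective.comp hφ, fun e he => ?_⟩, ?_⟩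
  · rw [Set.image_comp]
    exact hφE e he
  · rintro _ ⟨x, rfl⟩
    exact (φ x).2

def IsFreeRoot {VF : Type*} (EF : Set (Set VF)) (r : VF) (E : Set (Set V)) (v : V) : Prop :=
  ∀ X : Set V, X.Finite → ∃ θ : VF → V, IsCopy EF E θ ∧ θ r = v ∧ ∀ u, θ u ∈ X → θ u = v

section Obligatory

variable {k : ℕ} {VF : Type} {EF : Set (Set VF)}

theorem countablyColorableOn_not_isFreeRoot (hF : Obligatory.{u} k EF) (hk : 2 ≤ k)
    (hE : ∀ e ∈ E, e.ncard = k) (r : VF) : CountablyColorableOn E {v | ¬ IsFreeRoot EF r E v} := by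
  have hwitness : ∀ v, ∃ X : Set V, X.Finite ∧ (¬ IsFreeRoot EF r E v →
      ∀ θ, IsCopy EF E θ → θ r = v → ∃ u, θ u ∈ X ∧ θ u ≠ v) := by
    intro v
    by_cases hv : IsFreeRoot EF r E v
    · exact ⟨∅, Set.finite_empty, fun h => absurd hv h⟩
    · unfold IsFreeRoot at hv
      push Not at hv
      obtain ⟨X, hX, hblock⟩ := hv
      exact ⟨X, hX, fun _ => hblock⟩
  choose X hXfin hX using hwitness
  obtain ⟨c⟩ := SimpleGraph.nonempty_coloring_nat_fromRel_of_finite X hXfin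
  -- a copy inside one colour class, rooted at a vertex `v` that is not free, would have to meet
  -- `X v` outside `v`, i.e. contain a conflict edge
  have hclass : ∀ n, CountablyColorableOn E {v | ¬ IsFreeRoot EF r E v ∧ c v = n} := by
    intro n
    by_contra hn
    obtain ⟨θ, hθ, hθS⟩ := hF.exists_isCopy_subset hk hE hn
    obtain ⟨u, huX, hu⟩ := hX (θ r) (hθS ⟨r, rfl⟩).1 θ hθ rfl
    exact c.valid ((SimpleGraph.fromRel_adj _ _ _).2 ⟨hu, Or.inl huX⟩)
      ((hθS ⟨u, rfl⟩).2.trans (hθS ⟨r, rfl⟩).2.symm)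
  have hunion : {v | ¬ IsFreeRoot EF r E v} = ⋃ n, {v | ¬ IsFreeRoot EF r E v ∧ c v = n} := by
    ext v
    simp
  rw [hunion]
  exact countablyColorableOn_iUnion hclass

theorem not_countablyColorableOn_isFreeRoot (hF : Obligatory.{u} k EF) (hk : 2 ≤ k)
    (hE : ∀ e ∈ E, e.ncard = k) (hχ : aleph 1 ≤ chromaticNumber V E) (r : VF) :
    ¬ CountablyColorableOn E {v | IsFreeRoot EF r E v} := fun hfree => by
  have hall := countablyColorableOn_union hfree (countablyColorableOn_not_isFreeRoot hF hk hE r)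
  rw [← Set.compl_ofPred, Set.union_compl_self] at hall
  obtain ⟨f, hf⟩ := hall
  exact (chromaticNumber_lt_aleph_one fun e he => hf e he (Set.subset_univ e)).not_ge hχ

end Obligatory

end Hypergraph

theorem exists_isCopy_amalgam {V₁ V₂ W V : Type*} {E₁ : Set (Set V₁)} {E₂ : Set (Set V₂)}
    {E : Set (Set V)} {v₁ : V₁} {v₂ : V₂} {φ₁ : V₁ → W} {φ₂ : V₂ → W}
    (hφ₁ : Function.Injective φ₁) (hφ₂ : Function.Injective φ₂) (hv : φ₁ v₁ = φ₂ v₂)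
    (hmeet : Set.range φ₁ ∩ Set.range φ₂ = {φ₁ v₁})
    (hcover : Set.range φ₁ ∪ Set.range φ₂ = Set.univ)
    {ψ : V₁ → V} {θ : V₂ → V} (hψ : IsCopy E₁ E ψ) (hθ : IsCopy E₂ E θ) (hroot : θ v₂ = ψ v₁)
    (hψθ : ∀ u, θ u ∈ Set.range ψ → θ u = ψ v₁) :
    ∃ Φ : W → V, IsCopy ((fun e => φ₁ '' e) '' E₁ ∪ (fun e => φ₂ '' e) '' E₂) E Φ := by
  let Φ := Function.extend φ₁ ψ (Function.extend φ₂ θ fun _ => ψ v₁)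
  have hΦ₁ : ∀ a, Φ (φ₁ a) = ψ a := hφ₁.extend_apply _ _
  have hΦ₂ : ∀ u, Φ (φ₂ u) = θ u := by
    intro u
    by_cases h : ∃ a, φ₁ a = φ₂ u
    · obtain ⟨a, ha⟩ := h
      have hmem : φ₂ u ∈ Set.range φ₁ ∩ Set.range φ₂ := ⟨⟨a, ha⟩, u, rfl⟩
      rw [hmeet] at hmem
      rw [hφ₂ (hmem.trans hv), ← hv, hroot, hΦ₁]
    · exact (Function.extend_apply' _ _ _ h).trans (hφ₂.extend_apply _ _ _)
  have hglue : ∀ a u, ψ a = θ u → a = v₁ ∧ u = v₂ := fun a u h =>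
    have hroot' := hψθ u ⟨a, h⟩
    ⟨hψ.1 (h.trans hroot'), hθ.1 (hroot'.trans hroot.symm)⟩
  have hsurj : ∀ w, w ∈ Set.range φ₁ ∪ Set.range φ₂ := fun w => hcover ▸ Set.mem_univ w
  refine ⟨Φ, fun w w' h => ?_, ?_⟩
  · rcases hsurj w with ⟨a, rfl⟩ | ⟨u, rfl⟩ <;> rcases hsurj w' with ⟨a', rfl⟩ | ⟨u', rfl⟩
    · rw [hΦ₁, hΦ₁] at h
      rw [hψ.1 h]
    · rw [hΦ₁, hΦ₂] at h
      obtain ⟨rfl, rfl⟩ := hglue a u' h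
      exact hv
    · rw [hΦ₂, hΦ₁] at h
      obtain ⟨rfl, rfl⟩ := hglue a' u h.symm
      exact hv.symm
    · rw [hΦ₂, hΦ₂] at h
      rw [hθ.1 h]
  · rintro _ (⟨e, he, rfl⟩ | ⟨e, he, rfl⟩)
    · simpa only [Set.image_image, hΦ₁] using hψ.2 e he
    · simpa only [Set.image_image, hΦ₂] using hθ.2 e he

theorem obligatory_onePointAmalgamation_general (k : ℕ) (hk : 2 ≤ k)
    {V₁ V₂ W : Type} [Finite V₁]
    (E₁ : Set (Set V₁)) (E₂ : Set (Set V₂))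
    (hObl₁ : Obligatory.{u} k E₁) (hObl₂ : Obligatory.{u} k E₂)
    (v₁ : V₁) (v₂ : V₂) (φ₁ : V₁ → W) (φ₂ : V₂ → W)
    (hφ₁ : Function.Injective φ₁) (hφ₂ : Function.Injective φ₂)
    (hv : φ₁ v₁ = φ₂ v₂)
    (hmeet : Set.range φ₁ ∩ Set.range φ₂ = {φ₁ v₁})
    (hcover : Set.range φ₁ ∪ Set.range φ₂ = Set.univ) :
    Obligatory.{u} k
      ((fun e => φ₁ '' e) '' E₁ ∪ (fun e => φ₂ '' e) '' E₂ : Set (Set W)) := by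
  intro V E hE hχ
  obtain ⟨ψ, hψ, hψfree⟩ := hObl₁.exists_isCopy_subset hk hE
    (not_countablyColorableOn_isFreeRoot hObl₂ hk hE hχ v₂)
  obtain ⟨θ, hθ, hθroot, hθψ⟩ := hψfree ⟨v₁, rfl⟩ (Set.range ψ) (Set.finite_range ψ)
  exact exists_isCopy_amalgam hφ₁ hφ₂ hv hmeet hcover hψ hθ hθroot hθψ

/-- The class of obligatory finite `k`-uniform hypergraphs is closed under one-point
amalgamations: if `(V₁, E₁)` and `(V₂, E₂)` are obligatory and `(W, EW)` is obtained
from their disjoint union by identifying `v₁ ∈ V₁` with `v₂ ∈ V₂` — described here by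
injections `φ₁ : V₁ → W` and `φ₂ : V₂ → W` whose images cover `W` and meet exactly in
the amalgamated point `φ₁ v₁ = φ₂ v₂`, the edges of `W` being the images of the edges
of the two parts — then `(W, EW)` is obligatory. -/
theorem obligatory_onePointAmalgamation (k : ℕ) (hk : 2 ≤ k)
    {V₁ V₂ W : Type} [Finite V₁] [Finite V₂]
    (E₁ : Set (Set V₁)) (E₂ : Set (Set V₂))
    (h₁ : ∀ e ∈ E₁, e.ncard = k) (h₂ : ∀ e ∈ E₂, e.ncard = k)
    (hObl₁ : Obligatory.{u} k E₁) (hObl₂ : Obligatory.{u} k E₂)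
    (v₁ : V₁) (v₂ : V₂) (φ₁ : V₁ → W) (φ₂ : V₂ → W)
    (hφ₁ : Function.Injective φ₁) (hφ₂ : Function.Injective φ₂)
    (hv : φ₁ v₁ = φ₂ v₂)
    (hmeet : Set.range φ₁ ∩ Set.range φ₂ = {φ₁ v₁})
    (hcover : Set.range φ₁ ∪ Set.range φ₂ = Set.univ) :
    Obligatory.{u} k
      ((fun e => φ₁ '' e) '' E₁ ∪ (fun e => φ₂ '' e) '' E₂ : Set (Set W)) :=
  obligatory_onePointAmalgamation_general k hk E₁ E₂ hObl₁ hObl₂ v₁ v₂ φ₁ φ₂ hφ₁ hφ₂ hv hmeet hcover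
end
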